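/- arXiv:1312.0818 — 4 statements merged into one kernel-verified Lean document; each statement's English description precedes it below -/
import Mathlib

section
/- (Key algebraic lemma, deterministic form.) Let h > 0, let m ≥ 1 be an integer, and let y_0, y_1, …, y_m ∈ hℤ satisfy y_0 = 0 and |y_{k+1} − y_k| = h for all 0 ≤ k < m. Let x : hℤ → ℝ, f : ℝ → ℝ, and let r ≥ 1 be an integer. For j ∈ ℤ define the upcrossing count U_j = #{0 ≤ k < m : y_k = jh and y_{k+1} = (j+1)h} and the downcrossing count D_j = #{0 ≤ k < m : y_k = (j+1)h and y_{k+1} = jh}. Then Σ_{k=0}^{m−1} (1/2)(f(x(y_k)) + f(x(y_{k+1})))·(x(y_{k+1}) − x(y_k))^{2r−1} = Σ_{j∈ℤ} (1/2)(f(x(jh)) + f(x((j+1)h)))·(x((j+1)h) − x(jh))^{2r−1}·(U_j − D_j), the sum over j having finite support. -/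
open MeasureTheory ProbabilityTheory Filter Finset Real

noncomputable section

variable {Ω : Type*}

/-- `X` is a two-sided fractional Brownian motion of Hurst parameter `H` under `P`:
a centered Gaussian process with continuous paths, `X 0 = 0` and the fBm covariance. -/
def IsTwoSidedFBM [MeasurableSpace Ω] (P : Measure Ω) (H : ℝ) (X : ℝ → Ω → ℝ) : Prop :=
  (∀ ω, Continuous fun t => X t ω) ∧
  (∀ ω, X 0 ω = 0) ∧
  (∀ t, Measurable (X t)) ∧
  (∀ (m : ℕ) (t : Fin m → ℝ) (c : Fin m → ℝ), ∃ v : NNReal,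
    Measure.map (fun ω => ∑ i, c i * X (t i) ω) P = gaussianReal 0 v) ∧
  (∀ s t : ℝ, ∫ ω, X s ω * X t ω ∂P
      = (|s| ^ (2 * H) + |t| ^ (2 * H) - |t - s| ^ (2 * H)) / 2)

/-- `Y` is a standard (one-sided) Brownian motion under `P`. -/
def IsBrownianMotion [MeasurableSpace Ω] (P : Measure Ω) (Y : ℝ → Ω → ℝ) : Prop :=
  (∀ ω, Continuous fun t => Y t ω) ∧
  (∀ ω, Y 0 ω = 0) ∧
  (∀ t, Measurable (Y t)) ∧
  (∀ (m : ℕ) (t : Fin m → ℝ) (c : Fin m → ℝ), ∃ v : NNReal,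
    Measure.map (fun ω => ∑ i, c i * Y (t i) ω) P = gaussianReal 0 v) ∧
  (∀ s t : ℝ, 0 ≤ s → 0 ≤ t → ∫ ω, Y s ω * Y t ω ∂P = min s t)

/-- Successive hitting times `T_{k,n}` of the dyadic grid `𝒟_n = {j 2^{-n/2} : j ∈ ℤ}` by `Y`:
`T_{0,n} = 0` and `T_{k,n} = inf {s > T_{k-1,n} : Y s ∈ 𝒟_n \ {Y (T_{k-1,n})}}`. -/
def hitT (Y : ℝ → Ω → ℝ) (n : ℕ) : ℕ → Ω → ℝ
  | 0, _ => 0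
  | k + 1, ω =>
    sInf {s : ℝ | hitT Y n k ω < s ∧ (∃ j : ℤ, Y s ω = j * (2 : ℝ) ^ (-(n : ℝ) / 2)) ∧
      Y s ω ≠ Y (hitT Y n k ω) ω}

/-- The weighted odd-power variation `V_n^{(2r-1)}(f,t)` of `Z = X ∘ Y`, built on the
intrinsic skeletal structure: `Z_{T_{k,n}} = X (Y (T_{k,n}))`. -/
def Vodd (X Y : ℝ → Ω → ℝ) (n r : ℕ) (f : ℝ → ℝ) (t : ℝ) (ω : Ω) : ℝ :=
  ∑ k ∈ Finset.range ⌊(2 : ℝ) ^ n * t⌋₊,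
    (f (X (Y (hitT Y n k ω) ω) ω) + f (X (Y (hitT Y n (k + 1) ω) ω) ω)) / 2 *
      (X (Y (hitT Y n (k + 1) ω) ω) ω - X (Y (hitT Y n k ω) ω) ω) ^ (2 * r - 1)

/-- `f : ℝ → ℝ` is infinitely differentiable and bounded together with all its derivatives. -/
def CbInfty (f : ℝ → ℝ) : Prop :=
  ContDiff ℝ (⊤ : ℕ∞) f ∧ ∀ k : ℕ, ∃ C : ℝ, ∀ x : ℝ, |iteratedDeriv k f x| ≤ C

/-- The probabilists' Hermite polynomials: `He 0 = 1`, `He 1 x = x`,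
`He (p+1) x = x * He p x - p * He (p-1) x`. -/
def He : ℕ → ℝ → ℝ
  | 0, _ => 1
  | 1, x => x
  | p + 2, x => x * He (p + 1) x - ((p : ℝ) + 1) * He p x

/-- `W^{(2r-1)}_{±,n}(f,u)` (sign `e = ±1`): the Hermite variation of the rescaled fBm. -/
def Wpm (X : ℝ → Ω → ℝ) (H : ℝ) (e : ℝ) (n r : ℕ) (f : ℝ → ℝ) (u : ℝ) (ω : Ω) : ℝ :=
  ∑ j ∈ Finset.range ⌊(2 : ℝ) ^ ((n : ℝ) / 2) * u⌋₊,
    (f (X (e * j * (2 : ℝ) ^ (-(n : ℝ) / 2)) ω) +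
        f (X (e * ((j : ℝ) + 1) * (2 : ℝ) ^ (-(n : ℝ) / 2)) ω)) / 2 *
      He (2 * r - 1) ((2 : ℝ) ^ ((n : ℝ) * H / 2) *
        (X (e * ((j : ℝ) + 1) * (2 : ℝ) ^ (-(n : ℝ) / 2)) ω -
          X (e * j * (2 : ℝ) ^ (-(n : ℝ) / 2)) ω))

/-- `W_n^{(2r-1)}(f,u)`: equals `W_{+,n}(f,u)` for `u ≥ 0` and `W_{-,n}(f,-u)` for `u < 0`. -/
def Wn (X : ℝ → Ω → ℝ) (H : ℝ) (n r : ℕ) (f : ℝ → ℝ) (u : ℝ) (ω : Ω) : ℝ :=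
  if 0 ≤ u then Wpm X H 1 n r f u ω else Wpm X H (-1) n r f (-u) ω

/-- Increment correlation function of fBm over a unit grid:
`ρ_H(q) = (|q+1|^{2H} + |q-1|^{2H} - 2|q|^{2H})/2`. -/
def rhoH (H : ℝ) (q : ℤ) : ℝ :=
  (|(q : ℝ) + 1| ^ (2 * H) + |(q : ℝ) - 1| ^ (2 * H) - 2 * |(q : ℝ)| ^ (2 * H)) / 2

/-- The constant `κ₃ = √(6 Σ_{q∈ℤ} ρ_{1/6}(q)³) ≈ 2.322`. -/
def kappa3 : ℝ := Real.sqrt (6 * ∑' q : ℤ, (rhoH (1 / 6) q) ^ 3)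

/-- Key algebraic lemma, deterministic form. For a nearest-neighbour path
`y` on the grid `hℤ` started at `0`, the symmetric-weighted odd-power sum along the path
equals the sum over grid levels weighted by upcrossings minus downcrossings. -/
theorem key_algebraic_lemma
    (h : ℝ) (hh : 0 < h) (m : ℕ) (hm : 1 ≤ m)
    (y : ℕ → ℝ) (hy0 : y 0 = 0)
    (hgrid : ∀ k ≤ m, ∃ j : ℤ, y k = (j : ℝ) * h)
    (hstep : ∀ k < m, |y (k + 1) - y k| = h)
    (x : ℝ → ℝ) (f : ℝ → ℝ) (r : ℕ) (hr : 1 ≤ r) :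
    ∑ k ∈ Finset.range m,
        (f (x (y k)) + f (x (y (k + 1)))) / 2 * (x (y (k + 1)) - x (y k)) ^ (2 * r - 1)
      = ∑ᶠ j : ℤ,
          (f (x ((j : ℝ) * h)) + f (x (((j : ℝ) + 1) * h))) / 2 *
            (x (((j : ℝ) + 1) * h) - x ((j : ℝ) * h)) ^ (2 * r - 1) *
            ((Nat.card {k : ℕ | k < m ∧ y k = (j : ℝ) * h ∧ y (k + 1) = ((j : ℝ) + 1) * h} : ℝ)
              - (Nat.card {k : ℕ | k < m ∧ y k = ((j : ℝ) + 1) * h ∧ y (k + 1) = (j : ℝ) * h} : ℝ)) := by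
  classical
  have hne : h ≠ 0 := ne_of_gt hh
  have hinj : ∀ a b : ℤ, (a : ℝ) * h = (b : ℝ) * h → a = b := by
    intro a b hab
    exact_mod_cast mul_right_cancel₀ hne hab
  have hexJ : ∀ k, ∃ j : ℤ, k ≤ m → y k = (j : ℝ) * h := by
    intro k
    by_cases hk : k ≤ m
    · obtain ⟨j, hj⟩ := hgrid k hk
      exact ⟨j, fun _ => hj⟩
    · exact ⟨0, fun hk' => absurd hk' hk⟩
  choose J hJ using hexJ
  set g : ℤ → ℝ := fun j =>
    (f (x ((j : ℝ) * h)) + f (x (((j : ℝ) + 1) * h))) / 2 *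
      (x (((j : ℝ) + 1) * h) - x ((j : ℝ) * h)) ^ (2 * r - 1) with hgdef
  set P : ℤ → ℕ → Prop := fun j k => y k = (j : ℝ) * h ∧ y (k + 1) = ((j : ℝ) + 1) * h
    with hPdef
  set Q : ℤ → ℕ → Prop := fun j k => y k = ((j : ℝ) + 1) * h ∧ y (k + 1) = (j : ℝ) * h
    with hQdef
  set F : ℤ → ℕ → ℝ := fun j k => if P j k then g j else if Q j k then -g j else 0 with hFdef
  set S : Finset ℤ := (Finset.range m).image (fun k => min (J k) (J (k + 1))) with hSdef
  have hodd : Odd (2 * r - 1) := ⟨r - 1, by omega⟩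
  have hcardP : ∀ j : ℤ,
      Nat.card {k : ℕ | k < m ∧ y k = (j : ℝ) * h ∧ y (k + 1) = ((j : ℝ) + 1) * h}
        = ((Finset.range m).filter (fun k => P j k)).card := by
    intro j
    have hset : {k : ℕ | k < m ∧ y k = (j : ℝ) * h ∧ y (k + 1) = ((j : ℝ) + 1) * h}
        = ↑((Finset.range m).filter (fun k => P j k)) := by
      ext k
      simp [hPdef, and_assoc]
    rw [hset, Nat.card_coe_set_eq, Set.ncard_coe_finset]
  have hcardQ : ∀ j : ℤ,
      Nat.card {k : ℕ | k < m ∧ y k = ((j : ℝ) + 1) * h ∧ y (k + 1) = (j : ℝ) * h}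
        = ((Finset.range m).filter (fun k => Q j k)).card := by
    intro j
    have hset : {k : ℕ | k < m ∧ y k = ((j : ℝ) + 1) * h ∧ y (k + 1) = (j : ℝ) * h}
        = ↑((Finset.range m).filter (fun k => Q j k)) := by
      ext k
      simp [hQdef, and_assoc]
    rw [hset, Nat.card_coe_set_eq, Set.ncard_coe_finset]
  -- step classification
  have hstep' : ∀ k < m, (J (k + 1) = J k + 1 ∧ P (J k) k) ∨
      (J (k + 1) = J k - 1 ∧ Q (J (k + 1)) k) := by
    intro k hk
    have hyk := hJ k hk.le
    have hyk1 := hJ (k + 1) hk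
    rcases (abs_eq hh.le).mp (hstep k hk) with hcase | hcase
    · left
      have hy1 : y (k + 1) = ((J k : ℝ) + 1) * h := by rw [hyk] at hcase; linarith
      have hJ1 : J (k + 1) = J k + 1 := by
        apply hinj
        rw [← hyk1, hy1]; push_cast; ring
      exact ⟨hJ1, hyk, hy1⟩
    · right
      have hy1 : y (k + 1) = ((J k : ℝ) - 1) * h := by rw [hyk] at hcase; linarith
      have hJ1 : J (k + 1) = J k - 1 := by
        apply hinj
        rw [← hyk1, hy1]; push_cast; ring
      refine ⟨hJ1, ?_, ?_⟩
      · rw [hyk, hJ1]; push_cast; ring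
      · rw [hy1, hJ1]; push_cast; ring
  -- Claim A : each path term equals the sum over S of F
  have hA : ∀ k ∈ Finset.range m,
      (f (x (y k)) + f (x (y (k + 1)))) / 2 * (x (y (k + 1)) - x (y k)) ^ (2 * r - 1)
        = ∑ j ∈ S, F j k := by
    intro k hk
    rw [Finset.mem_range] at hk
    have hyk := hJ k hk.le
    have hyk1 := hJ (k + 1) hk
    rcases hstep' k hk with ⟨hJ1, hP⟩ | ⟨hJ1, hQ⟩
    · have hmem : J k ∈ S := by
        refine Finset.mem_image.mpr ⟨k, Finset.mem_range.mpr hk, ?_⟩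
        rw [min_eq_left (by omega : J k ≤ J (k + 1))]
      rw [Finset.sum_eq_single_of_mem (J k) hmem ?_]
      · have hFv : F (J k) k = g (J k) := by
          simp only [hFdef, if_pos hP]
        rw [hFv, hgdef, hP.1, hP.2]
      · intro j _ hjne
        have hnP : ¬ P j k := by
          rintro ⟨h1, -⟩
          exact hjne (hinj _ _ (by rw [← h1, hyk])).symm
        have hnQ : ¬ Q j k := by
          rintro ⟨h1, h2⟩
          have e1 : J k = j + 1 := hinj _ _ (by rw [← hyk, h1]; push_cast; ring)
          have e2 : J (k + 1) = j := hinj _ _ (by rw [← hyk1, h2])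
          omega
        simp only [hFdef, if_neg hnP, if_neg hnQ]
    · have hmem : J (k + 1) ∈ S := by
        refine Finset.mem_image.mpr ⟨k, Finset.mem_range.mpr hk, ?_⟩
        rw [min_eq_right (by omega : J (k + 1) ≤ J k)]
      rw [Finset.sum_eq_single_of_mem (J (k + 1)) hmem ?_]
      · have hnP : ¬ P (J (k + 1)) k := by
          rintro ⟨h1, -⟩
          have e1 : J k = J (k + 1) := hinj _ _ (by rw [← hyk, h1])
          omega
        have hFv : F (J (k + 1)) k = -g (J (k + 1)) := by
          simp only [hFdef, if_neg hnP, if_pos hQ]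
        rw [hFv, hgdef, hQ.1, hQ.2]
        rw [show x ((J (k + 1) : ℝ) * h) - x (((J (k + 1) : ℝ) + 1) * h)
            = -(x (((J (k + 1) : ℝ) + 1) * h) - x ((J (k + 1) : ℝ) * h)) by ring,
          hodd.neg_pow]
        ring
      · intro j _ hjne
        have hnP : ¬ P j k := by
          rintro ⟨h1, h2⟩
          have e1 : J k = j := hinj _ _ (by rw [← hyk, h1])
          have e2 : J (k + 1) = j + 1 := hinj _ _ (by rw [← hyk1, h2]; push_cast; ring)
          omega
        have hnQ : ¬ Q j k := by
          rintro ⟨-, h2⟩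
          exact hjne (hinj _ _ (by rw [← h2, hyk1])).symm
        simp only [hFdef, if_neg hnP, if_neg hnQ]
  -- Claim B : column sums
  have hB : ∀ j : ℤ, ∑ k ∈ Finset.range m, F j k
      = g j * ((((Finset.range m).filter (fun k => P j k)).card : ℝ)
          - (((Finset.range m).filter (fun k => Q j k)).card : ℝ)) := by
    intro j
    have hPQ : ∀ k, ¬ (P j k ∧ Q j k) := by
      rintro k ⟨⟨h1, -⟩, ⟨h2, -⟩⟩
      have : (j : ℝ) * h = ((j : ℝ) + 1) * h := by rw [← h1, h2]
      have : h = 0 := by linarith [this]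
      exact hne this
    have hsplit : ∀ k, F j k
        = (if P j k then g j else 0) + (if Q j k then -g j else 0) := by
      intro k
      by_cases hp : P j k
      · have hq : ¬ Q j k := fun hq => hPQ k ⟨hp, hq⟩
        simp [hFdef, hp, hq]
      · by_cases hq : Q j k <;> simp [hFdef, hp, hq]
    rw [Finset.sum_congr rfl fun k _ => hsplit k, Finset.sum_add_distrib,
      ← Finset.sum_filter, ← Finset.sum_filter, Finset.sum_const, Finset.sum_const]
    simp only [nsmul_eq_mul]
    ring
  -- support of the summand lies in S
  have hGsupp : (Function.support fun j : ℤ =>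
      (f (x ((j : ℝ) * h)) + f (x (((j : ℝ) + 1) * h))) / 2 *
        (x (((j : ℝ) + 1) * h) - x ((j : ℝ) * h)) ^ (2 * r - 1) *
        ((Nat.card {k : ℕ | k < m ∧ y k = (j : ℝ) * h ∧ y (k + 1) = ((j : ℝ) + 1) * h} : ℝ)
          - (Nat.card {k : ℕ | k < m ∧ y k = ((j : ℝ) + 1) * h ∧ y (k + 1) = (j : ℝ) * h} : ℝ)))
      ⊆ ↑S := by
    intro j hj
    simp only [Function.mem_support] at hj
    by_contra hjS
    apply hj
    have hUe : (Finset.range m).filter (fun k => P j k) = ∅ := by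
      rw [Finset.filter_eq_empty_iff]
      intro k hk hPk
      apply hjS
      have hk' := Finset.mem_range.mp hk
      have e1 : J k = j := hinj _ _ (by rw [← hJ k hk'.le, hPk.1])
      have e2 : J (k + 1) = j + 1 :=
        hinj _ _ (by rw [← hJ (k + 1) hk', hPk.2]; push_cast; ring)
      exact Finset.mem_coe.mpr (Finset.mem_image.mpr
        ⟨k, hk, by rw [e1, e2, min_eq_left (by omega)]⟩)
    have hDe : (Finset.range m).filter (fun k => Q j k) = ∅ := by
      rw [Finset.filter_eq_empty_iff]
      intro k hk hQk
      apply hjS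
      have hk' := Finset.mem_range.mp hk
      have e1 : J k = j + 1 :=
        hinj _ _ (by rw [← hJ k hk'.le, hQk.1]; push_cast; ring)
      have e2 : J (k + 1) = j := hinj _ _ (by rw [← hJ (k + 1) hk', hQk.2])
      exact Finset.mem_coe.mpr (Finset.mem_image.mpr
        ⟨k, hk, by rw [e1, e2, min_eq_right (by omega)]⟩)
    rw [hcardP j, hcardQ j, hUe, hDe]
    simp
  calc
    ∑ k ∈ Finset.range m,
        (f (x (y k)) + f (x (y (k + 1)))) / 2 * (x (y (k + 1)) - x (y k)) ^ (2 * r - 1)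
      = ∑ k ∈ Finset.range m, ∑ j ∈ S, F j k := Finset.sum_congr rfl hA
    _ = ∑ j ∈ S, ∑ k ∈ Finset.range m, F j k := Finset.sum_comm
    _ = ∑ j ∈ S,
          (f (x ((j : ℝ) * h)) + f (x (((j : ℝ) + 1) * h))) / 2 *
            (x (((j : ℝ) + 1) * h) - x ((j : ℝ) * h)) ^ (2 * r - 1) *
            ((Nat.card {k : ℕ | k < m ∧ y k = (j : ℝ) * h ∧ y (k + 1) = ((j : ℝ) + 1) * h} : ℝ)
              - (Nat.card {k : ℕ | k < m ∧ y k = ((j : ℝ) + 1) * h ∧ y (k + 1) = (j : ℝ) * h} : ℝ)) := by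
        refine Finset.sum_congr rfl fun j _ => ?_
        rw [hB j, hcardP j, hcardQ j, hgdef]
    _ = ∑ᶠ j : ℤ,
          (f (x ((j : ℝ) * h)) + f (x (((j : ℝ) + 1) * h))) / 2 *
            (x (((j : ℝ) + 1) * h) - x ((j : ℝ) * h)) ^ (2 * r - 1) *
            ((Nat.card {k : ℕ | k < m ∧ y k = (j : ℝ) * h ∧ y (k + 1) = ((j : ℝ) + 1) * h} : ℝ)
              - (Nat.card {k : ℕ | k < m ∧ y k = ((j : ℝ) + 1) * h ∧ y (k + 1) = (j : ℝ) * h} : ℝ)) :=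
        (finsum_eq_finset_sum_of_support_subset _ hGsupp).symm
end
end

section
/- Let H ∈ (0,1), let r ≥ 1 be an integer, let f : ℝ → ℝ, let t ≥ 0 and let n ≥ 1. Let a_{r,1}, …, a_{r,r} be the real coefficients such that x^{2r−1} = Σ_{l=1}^{r} a_{r,l} H_{2l−1}(x) for all x ∈ ℝ (with a_{r,r} = 1). Then, almost surely, V_n^{(2r−1)}(f,t) = 2^{−nH(r−1/2)} · Σ_{l=1}^{r} a_{r,l} · W_n^{(2l−1)}(f, Y(T_{⌊2^n t⌋,n})). -/
open MeasureTheory ProbabilityTheory Filter Finset Real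

noncomputable section

variable {Ω : Type*}

section Aux

lemma He_neg (p : ℕ) (x : ℝ) : He p (-x) = (-1) ^ p * He p x := by
  induction p using Nat.twoStepInduction generalizing x with
  | zero => simp [He]
  | one => simp [He]
  | more p ih1 ih2 =>
    simp only [He, ih1, ih2]
    ring

def Fsum (e : ℤ → ℝ) (m : ℤ) : ℝ :=
  if 0 ≤ m then ∑ j ∈ Finset.range m.toNat, e j
  else -∑ j ∈ Finset.range (-m).toNat, e (-(j : ℤ) - 1)

lemma Fsum_succ (e : ℤ → ℝ) (m : ℤ) : Fsum e (m + 1) = Fsum e m + e m := by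
  rcases le_or_gt 0 m with h | h
  · rw [Fsum, if_pos (by omega), Fsum, if_pos h]
    have : (m + 1).toNat = m.toNat + 1 := by omega
    rw [this, Finset.sum_range_succ]
    congr 2
    omega
  · rcases eq_or_lt_of_le (by omega : m + 1 ≤ 0) with h1 | h1
    · rw [Fsum, if_pos (le_of_eq h1.symm), Fsum, if_neg (by omega)]
      have hm : (-m).toNat = 1 := by omega
      rw [hm]
      have : m = -1 := by omega
      simp [h1, this]
    · rw [Fsum, if_neg (by omega), Fsum, if_neg (by omega)]
      have hm : (-m).toNat = (-(m+1)).toNat + 1 := by omega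
      rw [hm, Finset.sum_range_succ]
      have : -((-(m+1)).toNat : ℤ) - 1 = m := by omega
      rw [this]
      ring

lemma walk_sum (e : ℤ → ℝ) (s : ℕ → ℤ) (h0 : s 0 = 0) (term : ℕ → ℝ)
    (hterm : ∀ k, (s (k+1) = s k + 1 ∧ term k = e (s k)) ∨
      (s (k+1) = s k - 1 ∧ term k = - e (s k - 1))) :
    ∀ N, ∑ k ∈ Finset.range N, term k = Fsum e (s N) := by
  intro N
  induction N with
  | zero => simp [h0, Fsum]
  | succ N ih =>
    rw [Finset.sum_range_succ, ih]
    rcases hterm N with ⟨hs, ht⟩ | ⟨hs, ht⟩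
    · rw [hs, Fsum_succ, ht]
    · rw [hs, ht]
      have := Fsum_succ e (s N - 1)
      rw [sub_add_cancel] at this
      rw [this]
      ring

lemma Fsum_linear (A : Finset ℕ) (a : ℕ → ℝ) (c : ℝ) (el : ℕ → ℤ → ℝ) (m : ℤ) :
    Fsum (fun j => c * ∑ l ∈ A, a l * el l j) m = c * ∑ l ∈ A, a l * Fsum (el l) m := by
  rcases le_or_gt 0 m with h | h
  · simp only [Fsum, if_pos h, Finset.mul_sum]
    rw [Finset.sum_comm]
  · simp only [Fsum, if_neg (not_le.mpr h), Finset.mul_sum, ← Finset.sum_neg_distrib, mul_neg,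
      neg_mul]
    rw [Finset.sum_comm]

lemma law_Y [MeasurableSpace Ω] {P : Measure Ω} {Y : ℝ → Ω → ℝ}
    (hY : IsBrownianMotion P Y) (h : ℝ) :
    ∃ v : NNReal, Measure.map (Y h) P = gaussianReal 0 v := by
  obtain ⟨v, hv⟩ := hY.2.2.2.1 1 (fun _ => h) (fun _ => 1)
  have he : (fun ω => ∑ i : Fin 1, (fun _ : Fin 1 => (1:ℝ)) i * Y ((fun _ : Fin 1 => h) i) ω)
      = Y h := by
    funext ω; simp
  rw [he] at hv
  exact ⟨v, hv⟩

lemma second_moment_gauss (v : NNReal) : ∫ x, x * x ∂(gaussianReal 0 v) ≤ 3 * v := by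
  by_cases hv : v = 0
  · simp [hv]
  rw [gaussianReal_of_var_ne_zero _ hv, gaussianPDF_def]
  have hpdf : ∀ x, 0 ≤ gaussianPDFReal 0 v x := fun x => gaussianPDFReal_nonneg 0 v x
  have hmeas : Measurable (fun x => (gaussianPDFReal 0 v x).toNNReal) :=
    (measurable_gaussianPDFReal 0 v).real_toNNReal
  have heq : (fun x : ℝ => ENNReal.ofReal (gaussianPDFReal 0 v x))
      = fun x => ((gaussianPDFReal 0 v x).toNNReal : ENNReal) := rfl
  rw [heq, integral_withDensity_eq_integral_smul hmeas]
  have hvpos : (0:ℝ) < (v:ℝ) := by positivity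
  set b : ℝ := (4 * (v:ℝ))⁻¹ with hb
  have hbpos : 0 < b := by positivity
  set C : ℝ := (√(2 * π * v))⁻¹ * (4 * v / Real.exp 1) with hC
  have hdom : Integrable (fun x : ℝ => C * Real.exp (-b * x ^ 2)) :=
    (integrable_exp_neg_mul_sq hbpos).const_mul C
  have hptwise : ∀ x : ℝ, (gaussianPDFReal 0 v x).toNNReal • (x * x)
      ≤ C * Real.exp (-b * x ^ 2) := by
    intro x
    have h1 : (gaussianPDFReal 0 v x).toNNReal • (x * x)
        = gaussianPDFReal 0 v x * (x * x) := by
      rw [NNReal.smul_def, smul_eq_mul, Real.coe_toNNReal _ (hpdf x)]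
    rw [h1, gaussianPDFReal]
    have key : x ^ 2 * Real.exp (-(x - 0) ^ 2 / (2 * v))
        ≤ 4 * v / Real.exp 1 * Real.exp (-b * x ^ 2) := by
      have hsplit : Real.exp (-(x - 0) ^ 2 / (2 * v))
          = Real.exp (-(x ^ 2) / (4 * v)) * Real.exp (-b * x ^ 2) := by
        rw [← Real.exp_add]
        congr 1
        rw [hb]
        field_simp
        ring
      rw [hsplit, ← mul_assoc]
      have h2 : x ^ 2 * Real.exp (-(x ^ 2) / (4 * v)) ≤ 4 * v / Real.exp 1 := by
        set u : ℝ := x ^ 2 / (4 * v) with hu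
        have hu0 : 0 ≤ u := by positivity
        have h3 : x ^ 2 = 4 * v * u := by rw [hu]; field_simp
        have h4 : -(x ^ 2) / (4 * v) = -u := by rw [h3]; field_simp
        rw [h4, h3]
        have h5 : u * Real.exp (-u) ≤ (Real.exp 1)⁻¹ := by
          have hle : u ≤ Real.exp u / Real.exp 1 := by
            have h := Real.add_one_le_exp (u - 1)
            rw [← Real.exp_sub]
            linarith
          rw [Real.exp_neg]
          calc u * (Real.exp u)⁻¹ ≤ (Real.exp u / Real.exp 1) * (Real.exp u)⁻¹ :=
                mul_le_mul_of_nonneg_right hle (by positivity)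
            _ = (Real.exp 1)⁻¹ := by field_simp
        calc 4 * (v:ℝ) * u * Real.exp (-u) = 4 * v * (u * Real.exp (-u)) := by ring
          _ ≤ 4 * v * (Real.exp 1)⁻¹ := by
              exact mul_le_mul_of_nonneg_left h5 (by positivity)
          _ = 4 * v / Real.exp 1 := by rw [div_eq_mul_inv]
      exact mul_le_mul_of_nonneg_right h2 (Real.exp_pos _).le
    calc (√(2 * π * (v:ℝ)))⁻¹ * Real.exp (-(x - 0) ^ 2 / (2 * (v:ℝ))) * (x * x)
        = (√(2 * π * (v:ℝ)))⁻¹ * (x ^ 2 * Real.exp (-(x - 0) ^ 2 / (2 * (v:ℝ)))) := by ring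
      _ ≤ (√(2 * π * (v:ℝ)))⁻¹ * (4 * v / Real.exp 1 * Real.exp (-b * x ^ 2)) :=
          mul_le_mul_of_nonneg_left key (by positivity)
      _ = C * Real.exp (-b * x ^ 2) := by rw [hC]; ring
  have hnn : 0 ≤ᵐ[volume] fun x : ℝ => (gaussianPDFReal 0 v x).toNNReal • (x * x) := by
    refine ae_of_all _ fun x => ?_
    simp only [Pi.zero_apply, NNReal.smul_def, smul_eq_mul]
    exact mul_nonneg (NNReal.coe_nonneg _) (mul_self_nonneg x)
  refine le_trans (integral_mono_of_nonneg hnn hdom (ae_of_all _ hptwise)) ?_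
  rw [MeasureTheory.integral_const_mul, integral_gaussian]
  have h6 : π / b = 4 * π * (v:ℝ) := by rw [hb]; field_simp
  have hs : (0:ℝ) < Real.sqrt (2 * π * v) := Real.sqrt_pos.mpr (by positivity)
  have h7 : Real.sqrt (4 * π * (v:ℝ)) = Real.sqrt 2 * Real.sqrt (2 * π * v) := by
    rw [← Real.sqrt_mul (by norm_num : (0:ℝ) ≤ 2)]
    congr 1
    ring
  rw [h6, h7, hC]
  have hsqrt2 : Real.sqrt 2 ≤ 1.5 := by
    rw [show (1.5:ℝ) = Real.sqrt (1.5 ^ 2) by rw [Real.sqrt_sq]; norm_num]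
    exact Real.sqrt_le_sqrt (by norm_num)
  have hexp : (2:ℝ) ≤ Real.exp 1 := by
    have := Real.add_one_le_exp (1:ℝ)
    linarith
  calc (√(2 * π * (v:ℝ)))⁻¹ * (4 * v / Real.exp 1) * (Real.sqrt 2 * Real.sqrt (2 * π * v))
      = (4 * v / Real.exp 1) * Real.sqrt 2 * ((√(2 * π * (v:ℝ)))⁻¹ * Real.sqrt (2 * π * v)) := by
        ring
    _ = (4 * v / Real.exp 1) * Real.sqrt 2 := by
        rw [inv_mul_cancel₀ hs.ne', mul_one]
    _ ≤ (4 * v / 2) * 1.5 := by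
        have h8 : 4 * (v:ℝ) / Real.exp 1 ≤ 4 * v / 2 := by
          apply div_le_div_of_nonneg_left (by positivity) (by norm_num) hexp
        exact mul_le_mul h8 hsqrt2 (Real.sqrt_nonneg 2) (by positivity)
    _ = 3 * v := by ring

lemma gauss_Icc_le (v : NNReal) (hv : v ≠ 0) (M : ℝ) :
    gaussianReal 0 v (Set.Icc (-M) M) ≤ ENNReal.ofReal (2 * M * (√(2 * π * v))⁻¹) := by
  rw [gaussianReal_of_var_ne_zero _ hv, withDensity_apply _ measurableSet_Icc]
  have hb : ∀ x : ℝ, gaussianPDF 0 v x ≤ ENNReal.ofReal ((√(2 * π * v))⁻¹) := by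
    intro x
    rw [gaussianPDF]
    apply ENNReal.ofReal_le_ofReal
    rw [gaussianPDFReal]
    have h1 : Real.exp (-(x - 0) ^ 2 / (2 * v)) ≤ 1 := by
      rw [← Real.exp_zero]
      apply Real.exp_le_exp.mpr
      apply div_nonpos_of_nonpos_of_nonneg (neg_nonpos.mpr (sq_nonneg _)) (by positivity)
    calc (√(2 * π * (v:ℝ)))⁻¹ * Real.exp (-(x - 0) ^ 2 / (2 * (v:ℝ)))
        ≤ (√(2 * π * (v:ℝ)))⁻¹ * 1 := mul_le_mul_of_nonneg_left h1 (by positivity)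
      _ = (√(2 * π * (v:ℝ)))⁻¹ := mul_one _
  calc ∫⁻ x in Set.Icc (-M) M, gaussianPDF 0 v x
      ≤ ∫⁻ _ in Set.Icc (-M) M, ENNReal.ofReal ((√(2 * π * v))⁻¹) :=
        lintegral_mono fun x => hb x
    _ = ENNReal.ofReal ((√(2 * π * v))⁻¹) * volume (Set.Icc (-M) M) := setLIntegral_const _ _
    _ ≤ ENNReal.ofReal (2 * M * (√(2 * π * v))⁻¹) := by
        rw [Real.volume_Icc, ← ENNReal.ofReal_mul (by positivity)]
        apply ENNReal.ofReal_le_ofReal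
        rw [show M - -M = 2 * M by ring]
        rw [mul_comm]

lemma as_unbounded [MeasurableSpace Ω] {P : Measure Ω} [IsProbabilityMeasure P]
    {Y : ℝ → Ω → ℝ} (hY : IsBrownianMotion P Y) :
    ∀ᵐ ω ∂P, ∀ T M : ℝ, ∃ t, T < t ∧ M < |Y t ω| := by
  have key : ∀ T M : ℕ, P {ω | ∀ t : ℝ, (T:ℝ) < t → |Y t ω| ≤ (M:ℝ)} = 0 := by
    intro T M
    refine le_antisymm ?_ (by simp)
    have main : ∀ ε : NNReal, 0 < ε →
        P {ω | ∀ t : ℝ, (T:ℝ) < t → |Y t ω| ≤ (M:ℝ)} ≤ (ε : ENNReal) := by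
      intro ε hε
      have hE : (0:ℝ) < (ε:ℝ) := hε
      set A : ℝ := (2 * (M:ℝ) + 1) / ε with hA
      have hApos : 0 < A := by positivity
      set h : ℝ := max ((T:ℝ) + 1) (3 * A ^ 2 / (2 * π)) with hh
      have hpos : 0 < h := lt_of_lt_of_le (by positivity) (le_max_left _ _)
      have hTh : (T:ℝ) < h := lt_of_lt_of_le (by linarith) (le_max_left _ _)
      obtain ⟨v, hlaw⟩ := law_Y hY h
      -- second moment
      have hmom : ∫ x, x * x ∂(gaussianReal 0 v) = h := by
        rw [← hlaw, integral_map (hY.2.2.1 h).aemeasurable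
          (Continuous.aestronglyMeasurable (by continuity : Continuous fun x : ℝ => x * x))]
        rw [hY.2.2.2.2 h h hpos.le hpos.le, min_self]
      have hv3 : h ≤ 3 * (v:ℝ) := hmom ▸ second_moment_gauss v
      have hvpos : (0:ℝ) < (v:ℝ) := by nlinarith
      have hvne : v ≠ 0 := by
        intro h0
        rw [h0] at hvpos
        simp at hvpos
      -- subset
      have hsub : {ω | ∀ t : ℝ, (T:ℝ) < t → |Y t ω| ≤ (M:ℝ)}
          ⊆ Y h ⁻¹' (Set.Icc (-(M:ℝ)) (M:ℝ)) := by
        intro ω hω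
        have := hω h hTh
        simp only [Set.mem_preimage, Set.mem_Icc]
        constructor <;> [linarith [neg_abs_le (Y h ω)]; linarith [le_abs_self (Y h ω)]]
      calc P {ω | ∀ t : ℝ, (T:ℝ) < t → |Y t ω| ≤ (M:ℝ)}
          ≤ P (Y h ⁻¹' (Set.Icc (-(M:ℝ)) (M:ℝ))) := measure_mono hsub
        _ = gaussianReal 0 v (Set.Icc (-(M:ℝ)) (M:ℝ)) := by
            rw [← hlaw, Measure.map_apply (hY.2.2.1 h) measurableSet_Icc]
        _ ≤ ENNReal.ofReal (2 * (M:ℝ) * (√(2 * π * v))⁻¹) := gauss_Icc_le v hvne _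
        _ ≤ (ε : ENNReal) := by
            rw [← ENNReal.ofReal_coe_nnreal]
            apply ENNReal.ofReal_le_ofReal
            -- A ≤ √(2πv)
            have hA2 : A ^ 2 ≤ 2 * π * (v:ℝ) := by
              have h1 : 3 * A ^ 2 / (2 * π) ≤ h := le_max_right _ _
              have hπ : (0:ℝ) < 2 * π := by positivity
              rw [div_le_iff₀ hπ] at h1
              nlinarith
            have hAs : A ≤ √(2 * π * (v:ℝ)) := by
              rw [show A = √(A ^ 2) by rw [Real.sqrt_sq hApos.le]]
              exact Real.sqrt_le_sqrt hA2
            have hspos : (0:ℝ) < √(2 * π * (v:ℝ)) := lt_of_lt_of_le hApos hAs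
            have hinv : (√(2 * π * (v:ℝ)))⁻¹ ≤ A⁻¹ :=
              inv_anti₀ hApos hAs
            calc 2 * (M:ℝ) * (√(2 * π * (v:ℝ)))⁻¹ ≤ 2 * (M:ℝ) * A⁻¹ :=
                  mul_le_mul_of_nonneg_left hinv (by positivity)
              _ = 2 * (M:ℝ) * ((ε:ℝ) / (2 * (M:ℝ) + 1)) := by
                  rw [hA, inv_div]
              _ = (2 * (M:ℝ) / (2 * (M:ℝ) + 1)) * (ε:ℝ) := by ring
              _ ≤ 1 * (ε:ℝ) := by
                  have hd : (0:ℝ) < 2 * (M:ℝ) + 1 := by positivity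
                  apply mul_le_mul_of_nonneg_right _ hE.le
                  rw [div_le_one hd]
                  linarith
              _ = (ε:ℝ) := one_mul _
    have h0 : P {ω | ∀ t : ℝ, (T:ℝ) < t → |Y t ω| ≤ (M:ℝ)} ≤ (0:ENNReal) :=
      ENNReal.le_of_forall_pos_le_add fun ε hε _ => by
        rw [zero_add]; exact main ε hε
    exact h0
  have ae1 : ∀ᵐ ω ∂P, ∀ T M : ℕ, ¬ (∀ t : ℝ, (T:ℝ) < t → |Y t ω| ≤ (M:ℝ)) := by
    rw [ae_all_iff]
    intro T
    rw [ae_all_iff]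
    intro M
    rw [ae_iff]
    simpa [not_not] using key T M
  filter_upwards [ae1] with ω hω T M
  have h1 := hω ⌈T⌉₊ ⌈max M 0⌉₊
  push_neg at h1
  obtain ⟨t, ht1, ht2⟩ := h1
  refine ⟨t, lt_of_le_of_lt (Nat.le_ceil T) ht1, lt_of_le_of_lt ?_ ht2⟩
  exact le_trans (le_max_left M 0) (Nat.le_ceil _)

lemma grid_sep {δ : ℝ} (hδ : 0 < δ) {j z : ℤ} (hne : (j:ℝ) * δ ≠ (z:ℝ) * δ) :
    δ ≤ |(j:ℝ) * δ - (z:ℝ) * δ| := by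
  have hjz : j ≠ z := fun h => hne (by rw [h])
  have h1 : (1:ℝ) ≤ |(j:ℝ) - (z:ℝ)| := by
    have : (1:ℤ) ≤ |j - z| := Int.one_le_abs (sub_ne_zero.mpr hjz)
    calc (1:ℝ) = ((1:ℤ):ℝ) := by norm_num
      _ ≤ ((|j - z| : ℤ) : ℝ) := by exact_mod_cast this
      _ = |(j:ℝ) - (z:ℝ)| := by push_cast; ring
  calc δ = 1 * δ := (one_mul δ).symm
    _ ≤ |(j:ℝ) - (z:ℝ)| * δ := mul_le_mul_of_nonneg_right h1 hδ.le
    _ = |(j:ℝ) - (z:ℝ)| * |δ| := by rw [abs_of_pos hδ]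
    _ = |((j:ℝ) - (z:ℝ)) * δ| := (abs_mul _ _).symm
    _ = |(j:ℝ) * δ - (z:ℝ) * δ| := by ring_nf

lemma isClosed_grid (δ : ℝ) (hδ : δ ≠ 0) : IsClosed {x : ℝ | ∃ j : ℤ, x = (j:ℝ) * δ} := by
  have : {x : ℝ | ∃ j : ℤ, x = (j:ℝ) * δ} = (fun y : ℝ => y / δ) ⁻¹' (Set.range (Int.cast : ℤ → ℝ)) := by
    ext x
    simp only [Set.mem_setOf_eq, Set.mem_preimage, Set.mem_range]
    constructor
    · rintro ⟨j, rfl⟩; exact ⟨j, by field_simp⟩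
    · rintro ⟨j, hj⟩; exact ⟨j, by field_simp at hj; linarith [hj]⟩
  rw [this]
  exact Int.isClosedEmbedding_coe_real.isClosed_range.preimage (continuous_id.div_const δ)

lemma hit_step {w : ℝ → ℝ} (hc : Continuous w) {δ : ℝ} (hδ : 0 < δ)
    (hu : ∀ T M : ℝ, ∃ t, T < t ∧ M < |w t|)
    (T0 : ℝ) {z : ℤ} (hz : w T0 = (z:ℝ) * δ) :
    T0 < sInf {s | T0 < s ∧ (∃ j : ℤ, w s = (j:ℝ) * δ) ∧ w s ≠ w T0} ∧
      (w (sInf {s | T0 < s ∧ (∃ j : ℤ, w s = (j:ℝ) * δ) ∧ w s ≠ w T0}) = w T0 + δ ∨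
       w (sInf {s | T0 < s ∧ (∃ j : ℤ, w s = (j:ℝ) * δ) ∧ w s ≠ w T0}) = w T0 - δ) := by
  set S := {s | T0 < s ∧ (∃ j : ℤ, w s = (j:ℝ) * δ) ∧ w s ≠ w T0} with hS
  -- nonempty
  have hne : S.Nonempty := by
    obtain ⟨t, htT, htM⟩ := hu T0 (|w T0| + δ)
    rcases lt_abs.mp htM with hup | hdown
    · -- w t > w T0 + δ, hit w T0 + δ
      have hmem : w T0 + δ ∈ Set.Icc (w T0) (w t) := by
        constructor
        · linarith
        · have := le_abs_self (w T0)
          linarith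
      obtain ⟨s, hs, hws⟩ := intermediate_value_Icc htT.le hc.continuousOn hmem
      refine ⟨s, ?_, ⟨z + 1, by rw [hws, hz]; push_cast; ring⟩, by rw [hws]; linarith⟩
      rcases eq_or_lt_of_le hs.1 with h | h
      · exfalso; rw [← h] at hws; linarith
      · exact h
    · -- w t < -( |w T0| + δ ) ≤ w T0 - δ
      have hmem : w T0 - δ ∈ Set.Icc (w t) (w T0) := by
        constructor
        · have := neg_abs_le (w T0)
          linarith
        · linarith
      obtain ⟨s, hs, hws⟩ := intermediate_value_Icc' htT.le hc.continuousOn hmem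
      refine ⟨s, ?_, ⟨z - 1, by rw [hws, hz]; push_cast; ring⟩, by rw [hws]; linarith⟩
      rcases eq_or_lt_of_le hs.1 with h | h
      · exfalso; rw [← h] at hws; linarith
      · exact h
  have hbdd : BddBelow S := ⟨T0, fun s hs => hs.1.le⟩
  set T1 := sInf S with hT1
  -- T0 < T1
  have hlt : T0 < T1 := by
    obtain ⟨ε, hε, hcont⟩ := Metric.continuous_iff.mp hc T0 δ hδ
    have hlb : ∀ s ∈ S, T0 + ε ≤ s := by
      intro s hs
      by_contra hcon
      push_neg at hcon
      have hd : dist s T0 < ε := by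
        rw [Real.dist_eq, abs_of_pos (sub_pos.mpr hs.1)]
        linarith
      have h2 := hcont s hd
      rw [Real.dist_eq] at h2
      obtain ⟨j, hj⟩ := hs.2.1
      have h3 : δ ≤ |w s - w T0| := by
        rw [hj, hz]
        exact grid_sep hδ (by rw [← hj, ← hz]; exact hs.2.2)
      linarith
    calc T0 < T0 + ε := by linarith
      _ ≤ T1 := le_csInf hne hlb
  refine ⟨hlt, ?_⟩
  -- w T1 in closed set G
  have hG : (∃ j : ℤ, w T1 = (j:ℝ) * δ) ∧ δ ≤ |w T1 - w T0| := by
    have hcl : w T1 ∈ closure (w '' S) := by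
      have h1 : T1 ∈ closure S := csInf_mem_closure hne hbdd
      exact image_closure_subset_closure_image hc ⟨T1, h1, rfl⟩
    have hGclosed : IsClosed {x : ℝ | (∃ j : ℤ, x = (j:ℝ) * δ) ∧ δ ≤ |x - w T0|} := by
      apply IsClosed.inter (isClosed_grid δ hδ.ne')
      have : Continuous fun x : ℝ => |x - w T0| := (continuous_id.sub continuous_const).abs
      exact isClosed_le continuous_const this
    have hsub : w '' S ⊆ {x : ℝ | (∃ j : ℤ, x = (j:ℝ) * δ) ∧ δ ≤ |x - w T0|} := by
      rintro x ⟨s, hs, rfl⟩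
      obtain ⟨j, hj⟩ := hs.2.1
      refine ⟨⟨j, hj⟩, ?_⟩
      rw [hj, hz]
      exact grid_sep hδ (by rw [← hj, ← hz]; exact hs.2.2)
    have := closure_minimal hsub hGclosed hcl
    exact this
  obtain ⟨⟨j1, hj1⟩, habs⟩ := hG
  rcases le_or_gt (w T0) (w T1) with hcase | hcase
  · -- up
    left
    rw [abs_of_nonneg (by linarith)] at habs
    by_contra hne2
    have hstrict : w T0 + δ < w T1 := by
      rcases eq_or_lt_of_le (by linarith : w T0 + δ ≤ w T1) with h | h
      · exact absurd h.symm hne2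
      · exact h
    have hmem : w T0 + δ ∈ Set.Icc (w T0) (w T1) := ⟨by linarith, by linarith⟩
    obtain ⟨s, hs, hws⟩ := intermediate_value_Icc hlt.le hc.continuousOn hmem
    have hsne0 : T0 < s := by
      rcases eq_or_lt_of_le hs.1 with h | h
      · exfalso; rw [← h] at hws; linarith
      · exact h
    have hsS : s ∈ S := ⟨hsne0, ⟨z + 1, by rw [hws, hz]; push_cast; ring⟩, by rw [hws]; linarith⟩
    have : T1 ≤ s := csInf_le hbdd hsS
    have hsn1 : s < T1 := by
      rcases eq_or_lt_of_le hs.2 with h | h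
      · exfalso; rw [h] at hws; linarith
      · exact h
    linarith
  · -- down
    right
    rw [abs_of_nonpos (by linarith)] at habs
    by_contra hne2
    have hstrict : w T1 < w T0 - δ := by
      rcases eq_or_lt_of_le (by linarith : w T1 ≤ w T0 - δ) with h | h
      · exact absurd h hne2
      · exact h
    have hmem : w T0 - δ ∈ Set.Icc (w T1) (w T0) := ⟨by linarith, by linarith⟩
    obtain ⟨s, hs, hws⟩ := intermediate_value_Icc' hlt.le hc.continuousOn hmem
    have hsne0 : T0 < s := by
      rcases eq_or_lt_of_le hs.1 with h | h
      · exfalso; rw [← h] at hws; linarith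
      · exact h
    have hsS : s ∈ S := ⟨hsne0, ⟨z - 1, by rw [hws, hz]; push_cast; ring⟩, by rw [hws]; linarith⟩
    have : T1 ≤ s := csInf_le hbdd hsS
    have hsn1 : s < T1 := by
      rcases eq_or_lt_of_le hs.2 with h | h
      · exfalso; rw [h] at hws; linarith
      · exact h
    linarith

lemma hit_chain {Y : ℝ → Ω → ℝ} (n : ℕ) (ω : Ω)
    (hc : Continuous fun t => Y t ω) (h0 : Y 0 ω = 0)
    (hu : ∀ T M : ℝ, ∃ t, T < t ∧ M < |Y t ω|) :
    ∀ k : ℕ, ∃ z : ℤ, Y (hitT Y n k ω) ω = (z : ℝ) * (2 : ℝ) ^ (-(n : ℝ) / 2) := by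
  have hδ : (0:ℝ) < (2 : ℝ) ^ (-(n : ℝ) / 2) := Real.rpow_pos_of_pos (by norm_num) _
  intro k
  induction k with
  | zero => exact ⟨0, by simp [hitT, h0]⟩
  | succ k ih =>
    obtain ⟨z, hz⟩ := ih
    have hstep := hit_step hc hδ hu (hitT Y n k ω) hz
    have hunf : hitT Y n (k+1) ω = sInf {s : ℝ | hitT Y n k ω < s ∧
        (∃ j : ℤ, Y s ω = (j:ℝ) * (2:ℝ) ^ (-(n:ℝ)/2)) ∧ Y s ω ≠ Y (hitT Y n k ω) ω} := rfl
    rcases hstep.2 with h | h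
    · refine ⟨z + 1, ?_⟩
      rw [hunf, h, hz]; push_cast; ring
    · refine ⟨z - 1, ?_⟩
      rw [hunf, h, hz]; push_cast; ring

lemma hit_pm {Y : ℝ → Ω → ℝ} (n : ℕ) (ω : Ω)
    (hc : Continuous fun t => Y t ω)
    (hu : ∀ T M : ℝ, ∃ t, T < t ∧ M < |Y t ω|) (k : ℕ) {z : ℤ}
    (hz : Y (hitT Y n k ω) ω = (z : ℝ) * (2 : ℝ) ^ (-(n : ℝ) / 2)) :
    Y (hitT Y n (k+1) ω) ω = Y (hitT Y n k ω) ω + (2 : ℝ) ^ (-(n : ℝ) / 2) ∨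
      Y (hitT Y n (k+1) ω) ω = Y (hitT Y n k ω) ω - (2 : ℝ) ^ (-(n : ℝ) / 2) := by
  have hδ : (0:ℝ) < (2 : ℝ) ^ (-(n : ℝ) / 2) := Real.rpow_pos_of_pos (by norm_num) _
  exact (hit_step hc hδ hu (hitT Y n k ω) hz).2

lemma natFloor_intCast (z : ℤ) : ⌊(z : ℝ)⌋₊ = z.toNat := by
  rcases le_or_gt 0 z with h | h
  · have h1 : (z : ℝ) = (z.toNat : ℝ) := by exact_mod_cast (Int.toNat_of_nonneg h).symm
    rw [h1, Nat.floor_natCast]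
  · rw [Nat.floor_eq_zero.mpr (by exact_mod_cast h.trans_le zero_le_one), Int.toNat_of_nonpos h.le]

end Aux

/-- Step 2: decomposition (2.8). If `x^{2r-1} = Σ_{l=1}^r a_{r,l} H_{2l-1}(x)`
with `a_{r,r} = 1`, then almost surely
`V_n^{(2r-1)}(f,t) = 2^{-nH(r-1/2)} Σ_{l=1}^r a_{r,l} W_n^{(2l-1)}(f, Y(T_{⌊2^n t⌋,n}))`. -/
theorem Vodd_eq_hermite_decomposition
    [MeasurableSpace Ω] (P : Measure Ω) [IsProbabilityMeasure P]
    (H : ℝ) (hH0 : 0 < H) (hH1 : H < 1)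
    (X Y : ℝ → Ω → ℝ)
    (hX : IsTwoSidedFBM P H X) (hY : IsBrownianMotion P Y)
    (hindep : IndepFun (fun ω => fun u : ℝ => X u ω) (fun ω => fun u : ℝ => Y u ω) P)
    (r : ℕ) (hr : 1 ≤ r) (f : ℝ → ℝ) (t : ℝ) (ht : 0 ≤ t) (n : ℕ) (hn : 1 ≤ n)
    (a : ℕ → ℝ)
    (ha : ∀ x : ℝ, x ^ (2 * r - 1) = ∑ l ∈ Finset.Icc 1 r, a l * He (2 * l - 1) x)
    (har : a r = 1) :
    ∀ᵐ ω ∂P,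
      Vodd X Y n r f t ω
        = (2 : ℝ) ^ (-(n : ℝ) * H * ((r : ℝ) - 1 / 2)) *
            ∑ l ∈ Finset.Icc 1 r,
              a l * Wn X H n l f (Y (hitT Y n ⌊(2 : ℝ) ^ n * t⌋₊ ω) ω) ω := by
  have hδpos : (0:ℝ) < (2 : ℝ) ^ (-(n : ℝ) / 2) := Real.rpow_pos_of_pos (by norm_num) _
  set δ : ℝ := (2 : ℝ) ^ (-(n : ℝ) / 2) with hδdef
  have hδne : δ ≠ 0 := hδpos.ne'
  set c : ℝ := (2 : ℝ) ^ ((n : ℝ) * H / 2) with hcdef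
  set c' : ℝ := (2 : ℝ) ^ (-(n : ℝ) * H * ((r : ℝ) - 1 / 2)) with hc'def
  set N : ℕ := ⌊(2 : ℝ) ^ n * t⌋₊ with hNdef
  -- the exponent identity
  have hk : ((2 * r - 1 : ℕ) : ℝ) = 2 * (r : ℝ) - 1 := by
    rw [Nat.cast_sub (by omega : 1 ≤ 2 * r)]
    push_cast
    ring
  have hconst : c' * c ^ (2 * r - 1) = 1 := by
    rw [hcdef, hc'def, ← Real.rpow_natCast ((2:ℝ) ^ ((n : ℝ) * H / 2)) (2 * r - 1),
      ← Real.rpow_mul (by norm_num : (0:ℝ) ≤ 2),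
      ← Real.rpow_add (by norm_num : (0:ℝ) < 2)]
    have hz : -(n : ℝ) * H * ((r : ℝ) - 1 / 2) + (n : ℝ) * H / 2 * ((2 * r - 1 : ℕ) : ℝ) = 0 := by
      rw [hk]; ring
    rw [hz, Real.rpow_zero]
  have hodd : Odd (2 * r - 1) := ⟨r - 1, by omega⟩
  filter_upwards [as_unbounded hY] with ω hu
  -- the integer walk
  have hchain := hit_chain n ω (hY.1 ω) (hY.2.1 ω) hu
  choose s hs using hchain
  have hs0 : s 0 = 0 := by
    have h1 := hs 0
    rw [show hitT Y n 0 ω = 0 from rfl, hY.2.1 ω] at h1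
    have h2 : ((s 0 : ℤ) : ℝ) = 0 := by
      rcases mul_eq_zero.mp h1.symm with h | h
      · exact h
      · exact absurd h hδne
    exact_mod_cast h2
  have hstep : ∀ k, s (k + 1) = s k + 1 ∨ s (k + 1) = s k - 1 := by
    intro k
    rcases hit_pm n ω (hY.1 ω) hu k (hs k) with h | h
    · left
      have h1 : ((s (k+1) : ℤ) : ℝ) * δ = (((s k : ℤ) : ℝ) + 1) * δ := by
        rw [← hs (k+1), h, hs k]; ring
      have h2 : ((s (k+1) : ℤ) : ℝ) = ((s k : ℤ) : ℝ) + 1 := mul_right_cancel₀ hδne h1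
      exact_mod_cast h2
    · right
      have h1 : ((s (k+1) : ℤ) : ℝ) * δ = (((s k : ℤ) : ℝ) - 1) * δ := by
        rw [← hs (k+1), h, hs k]; ring
      have h2 : ((s (k+1) : ℤ) : ℝ) = ((s k : ℤ) : ℝ) - 1 := mul_right_cancel₀ hδne h1
      exact_mod_cast h2
  -- the edge sums
  set el : ℕ → ℤ → ℝ := fun l j =>
    (f (X ((j : ℝ) * δ) ω) + f (X (((j : ℝ) + 1) * δ) ω)) / 2 *
      He (2 * l - 1) (c * (X (((j : ℝ) + 1) * δ) ω - X ((j : ℝ) * δ) ω)) with heldef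
  set e0 : ℤ → ℝ := fun j =>
    (f (X ((j : ℝ) * δ) ω) + f (X (((j : ℝ) + 1) * δ) ω)) / 2 *
      (X (((j : ℝ) + 1) * δ) ω - X ((j : ℝ) * δ) ω) ^ (2 * r - 1) with he0def
  -- Step 1 : Vodd = Fsum e0 (s N)
  have hV : Vodd X Y n r f t ω = Fsum e0 (s N) := by
    rw [Vodd]
    have hterm : ∀ k ∈ Finset.range N,
        (f (X (Y (hitT Y n k ω) ω) ω) + f (X (Y (hitT Y n (k + 1) ω) ω) ω)) / 2 *
          (X (Y (hitT Y n (k + 1) ω) ω) ω - X (Y (hitT Y n k ω) ω) ω) ^ (2 * r - 1)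
        = (f (X ((s k : ℝ) * δ) ω) + f (X ((s (k+1) : ℝ) * δ) ω)) / 2 *
          (X ((s (k+1) : ℝ) * δ) ω - X ((s k : ℝ) * δ) ω) ^ (2 * r - 1) := by
      intro k _
      rw [hs k, hs (k+1)]
    rw [Finset.sum_congr rfl hterm]
    refine walk_sum e0 s hs0 _ ?_ N
    intro k
    rcases hstep k with h | h
    · left
      refine ⟨h, ?_⟩
      rw [h, he0def]
      beta_reduce
      push_cast
      ring_nf
    · right
      refine ⟨h, ?_⟩
      rw [h, he0def]
      beta_reduce
      have hcast1 : ((s k - 1 : ℤ) : ℝ) = (s k : ℝ) - 1 := by push_cast; ring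
      have hcast2 : ((s k - 1 : ℤ) : ℝ) + 1 = (s k : ℝ) := by push_cast; ring
      rw [hcast2, hcast1]
      rw [show X (((s k : ℝ) - 1) * δ) ω - X ((s k : ℝ) * δ) ω
          = -(X ((s k : ℝ) * δ) ω - X (((s k : ℝ) - 1) * δ) ω) by ring, hodd.neg_pow]
      ring
  -- Step 2 : pointwise Hermite decomposition of e0
  have he0 : e0 = fun j => c' * ∑ l ∈ Finset.Icc 1 r, a l * el l j := by
    funext j
    rw [he0def, heldef]
    beta_reduce
    set A : ℝ := X ((j : ℝ) * δ) ω
    set B : ℝ := X (((j : ℝ) + 1) * δ) ω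
    have h1 : (B - A) ^ (2 * r - 1) = c' * (c * (B - A)) ^ (2 * r - 1) := by
      rw [mul_pow, ← mul_assoc, hconst, one_mul]
    have h2 : (c * (B - A)) ^ (2 * r - 1)
        = ∑ l ∈ Finset.Icc 1 r, a l * He (2 * l - 1) (c * (B - A)) := ha _
    rw [h1, h2, Finset.mul_sum, Finset.mul_sum, Finset.mul_sum]
    refine Finset.sum_congr rfl fun l _ => ?_
    ring
  have hVF : Fsum e0 (s N) = c' * ∑ l ∈ Finset.Icc 1 r, a l * Fsum (el l) (s N) := by
    rw [he0]
    exact Fsum_linear _ _ _ _ _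
  -- Step 3 : Wn = Fsum (el l) (s N) for each l
  have hW : ∀ l ∈ Finset.Icc 1 r,
      Wn X H n l f (Y (hitT Y n N ω) ω) ω = Fsum (el l) (s N) := by
    intro l hl
    have hl1 : 1 ≤ l := (Finset.mem_Icc.mp hl).1
    have hoddl : Odd (2 * l - 1) := ⟨l - 1, by omega⟩
    rw [hs N, Wn]
    rcases le_or_gt 0 (s N) with hpos | hneg
    · have hu0 : (0:ℝ) ≤ (s N : ℝ) * δ :=
        mul_nonneg (by exact_mod_cast hpos) hδpos.le
      rw [if_pos hu0, Wpm]
      have hcollapse : (2:ℝ) ^ ((n : ℝ) / 2) * ((s N : ℝ) * δ) = ((s N : ℤ) : ℝ) := by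
        rw [hδdef, mul_comm ((s N : ℤ) : ℝ), ← mul_assoc,
          ← Real.rpow_add (by norm_num : (0:ℝ) < 2)]
        rw [show (n:ℝ)/2 + -(n:ℝ)/2 = 0 by ring, Real.rpow_zero, one_mul]
      rw [hcollapse, natFloor_intCast, Fsum, if_pos hpos]
      refine Finset.sum_congr rfl fun j _ => ?_
      rw [heldef]
      beta_reduce
      have e1 : (1:ℝ) * (j : ℝ) * δ = ((j : ℤ) : ℝ) * δ := by push_cast; ring
      have e2 : (1:ℝ) * ((j : ℝ) + 1) * δ = (((j : ℤ) : ℝ) + 1) * δ := by push_cast; ring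
      rw [e1, e2]
    · have hu0 : ¬ (0:ℝ) ≤ (s N : ℝ) * δ := by
        push_neg
        exact mul_neg_of_neg_of_pos (by exact_mod_cast hneg) hδpos
      rw [if_neg hu0, Wpm]
      have hcollapse : (2:ℝ) ^ ((n : ℝ) / 2) * (-((s N : ℝ) * δ)) = ((-(s N) : ℤ) : ℝ) := by
        rw [hδdef]
        push_cast
        rw [show -(((s N : ℤ) : ℝ) * (2:ℝ) ^ (-(n : ℝ) / 2))
            = -((s N : ℤ) : ℝ) * (2:ℝ) ^ (-(n : ℝ) / 2) by ring,
          mul_comm (-((s N : ℤ) : ℝ)), ← mul_assoc,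
          ← Real.rpow_add (by norm_num : (0:ℝ) < 2)]
        rw [show (n:ℝ)/2 + -(n:ℝ)/2 = 0 by ring, Real.rpow_zero, one_mul]
      rw [hcollapse, natFloor_intCast, Fsum, if_neg (not_le.mpr hneg)]
      rw [← Finset.sum_neg_distrib]
      refine Finset.sum_congr rfl fun j _ => ?_
      rw [heldef]
      beta_reduce
      have e1 : (-1:ℝ) * (j : ℝ) * δ = (((-(j:ℤ) - 1 : ℤ) : ℝ) + 1) * δ := by push_cast; ring
      have e2 : (-1:ℝ) * ((j : ℝ) + 1) * δ = ((-(j:ℤ) - 1 : ℤ) : ℝ) * δ := by push_cast; ring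
      rw [e1, e2]
      rw [show c * (X (((-(j:ℤ) - 1 : ℤ) : ℝ) * δ) ω - X ((((-(j:ℤ) - 1 : ℤ) : ℝ) + 1) * δ) ω)
          = -(c * (X ((((-(j:ℤ) - 1 : ℤ) : ℝ) + 1) * δ) ω - X (((-(j:ℤ) - 1 : ℤ) : ℝ) * δ) ω))
          by ring]
      rw [He_neg]
      rw [Odd.neg_one_pow hoddl]
      ring
  -- Final assembly
  rw [hV, hVF]
  congr 1
  refine Finset.sum_congr rfl fun l hl => ?_
  rw [hW l hl]
end
end

section
/- There exist real constants c_3, c_4, c_5, c_6, c_7 (independent of f, a, b) such that for every function f : ℝ → ℝ of class C^{14} whose derivatives up to order 14 are bounded, there is a constant C_f > 0 with the following property: for all a, b ∈ ℝ, f(b) − f(a) = (1/2)(f'(a) + f'(b))(b−a) − (1/24)(f'''(a) + f'''(b))(b−a)³ + Σ_{r=3}^{7} c_r (f^{(2r−1)}(a) + f^{(2r−1)}(b))(b−a)^{2r−1} + R(a,b), where the remainder satisfies |R(a,b)| ≤ C_f |b−a|^{14}. -/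
open MeasureTheory ProbabilityTheory Filter Finset Real

noncomputable section

variable {Ω : Type*}

lemma iter_iter (i j : ℕ) (f : ℝ → ℝ) :
    iteratedDeriv i (iteratedDeriv j f) = iteratedDeriv (i + j) f := by
  simp only [iteratedDeriv_eq_iterate, ← Function.iterate_add_apply]

lemma iDW_eq {f : ℝ → ℝ} {N : ℕ} (hf : ContDiff ℝ (N : ℕ) f) {m : ℕ} (hm : m ≤ N)
    {a b x : ℝ} (hab : a < b) (hx : x ∈ Set.Icc a b) :
    iteratedDerivWithin m f (Set.Icc a b) x = iteratedDeriv m f x := by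
  have h1 : HasFTaylorSeriesUpToOn ((N : ℕ∞) : WithTop ℕ∞) f (ftaylorSeries ℝ f) (Set.Icc a b) :=
    (hasFTaylorSeriesUpToOn_univ_iff.mpr (contDiff_iff_ftaylorSeries.mp (by exact_mod_cast hf))).mono
      (Set.subset_univ _)
  have h3 := h1.eq_iteratedFDerivWithin_of_uniqueDiffOn (by exact_mod_cast hm)
    (uniqueDiffOn_Icc hab) hx
  rw [iteratedDerivWithin_eq_iteratedFDerivWithin, iteratedDeriv_eq_iteratedFDeriv, ← h3]
  rfl

lemma taylor_forward {g : ℝ → ℝ} {N : ℕ} (hg : ContDiff ℝ (N + 1 : ℕ) g) {M : ℝ}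
    (hM : ∀ z, |iteratedDeriv (N + 1) g z| ≤ M) {x y : ℝ} (hxy : x < y) :
    |g y - ∑ i ∈ Finset.range (N + 1), (Nat.factorial i : ℝ)⁻¹ * (y - x) ^ i * iteratedDeriv i g x|
      ≤ M * |y - x| ^ (N + 1) / (Nat.factorial N : ℝ) := by
  have key := taylor_mean_remainder_bound (n := N) hxy.le
    (hg.contDiffOn (s := Set.Icc x y)) (Set.right_mem_Icc.mpr hxy.le)
    (fun z hz => by
      rw [Real.norm_eq_abs, iDW_eq hg le_rfl hxy hz]
      exact hM z)
  have ht : taylorWithinEval g N (Set.Icc x y) x y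
      = ∑ i ∈ Finset.range (N + 1), (Nat.factorial i : ℝ)⁻¹ * (y - x) ^ i * iteratedDeriv i g x := by
    rw [taylor_within_apply]
    refine Finset.sum_congr rfl fun i hi => ?_
    rw [smul_eq_mul,
      iDW_eq hg (Nat.le_succ_of_le (Nat.lt_succ_iff.mp (Finset.mem_range.mp hi))) hxy
        (Set.left_mem_Icc.mpr hxy.le)]
  rw [ht, Real.norm_eq_abs] at key
  calc |g y - ∑ i ∈ Finset.range (N + 1), (Nat.factorial i : ℝ)⁻¹ * (y - x) ^ i * iteratedDeriv i g x|
      ≤ M * (y - x) ^ (N + 1) / (Nat.factorial N : ℝ) := key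
    _ = M * |y - x| ^ (N + 1) / (Nat.factorial N : ℝ) := by rw [abs_of_pos (sub_pos.mpr hxy)]

lemma taylor_bound {g : ℝ → ℝ} {N : ℕ} (hg : ContDiff ℝ (N + 1 : ℕ) g) {M : ℝ}
    (hM : ∀ z, |iteratedDeriv (N + 1) g z| ≤ M) (x y : ℝ) :
    |g y - ∑ i ∈ Finset.range (N + 1), (Nat.factorial i : ℝ)⁻¹ * (y - x) ^ i * iteratedDeriv i g x|
      ≤ M * |y - x| ^ (N + 1) := by
  have hM0 : 0 ≤ M := (abs_nonneg _).trans (hM 0)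
  have fac1 : (1 : ℝ) ≤ (Nat.factorial N : ℝ) := by exact_mod_cast Nat.one_le_iff_ne_zero.mpr N.factorial_ne_zero
  rcases lt_trichotomy x y with h | h | h
  · exact (taylor_forward hg hM h).trans
      (div_le_self (by positivity) fac1)
  · subst h
    simp [Finset.sum_range_succ', sub_self]
  · -- y < x : use reflection
    have hg2 : ContDiff ℝ (N + 1 : ℕ) (fun t => g (-t)) := hg.comp (contDiff_neg)
    have hM2 : ∀ z, |iteratedDeriv (N + 1) (fun t => g (-t)) z| ≤ M := by
      intro z
      rw [iteratedDeriv_comp_neg, smul_eq_mul, abs_mul, abs_pow, abs_neg, abs_one, one_pow,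
        one_mul]
      exact hM (-z)
    have h2 := taylor_forward hg2 hM2 (neg_lt_neg h)
    have e2 : ∀ i ∈ Finset.range (N + 1),
        (Nat.factorial i : ℝ)⁻¹ * (-y - -x) ^ i * iteratedDeriv i (fun t => g (-t)) (-x)
          = (Nat.factorial i : ℝ)⁻¹ * (y - x) ^ i * iteratedDeriv i g x := by
      intro i _
      rw [iteratedDeriv_comp_neg, neg_neg, smul_eq_mul,
        show (-y - -x : ℝ) = -(y - x) by ring, neg_pow]
      rcases neg_one_pow_eq_or ℝ i with hp | hp <;> rw [hp] <;> ring
    rw [Finset.sum_congr rfl e2] at h2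
    simp only [neg_neg] at h2
    have e3 : |(-y) - -x| = |y - x| := by
      rw [show (-y - -x : ℝ) = -(y - x) by ring, abs_neg]
    rw [e3] at h2
    exact h2.trans (div_le_self (by positivity) fac1)

lemma combo_bound {A0 A1 A3 A5 A7 A9 A11 A13 t M : ℝ} (hM0 : 0 ≤ M)
    (h0 : |A0| ≤ M * |t| ^ 14) (h1 : |A1| ≤ M * |t| ^ 13) (h3 : |A3| ≤ M * |t| ^ 11)
    (h5 : |A5| ≤ M * |t| ^ 9) (h7 : |A7| ≤ M * |t| ^ 7) (h9 : |A9| ≤ M * |t| ^ 5)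
    (h11 : |A11| ≤ M * |t| ^ 3) (h13 : |A13| ≤ M * |t| ^ 1) :
    |A0 + (-(1/2)) * A1 * t ^ 1 + (1/24) * A3 * t ^ 3 + (-(1/240)) * A5 * t ^ 5
      + (17/40320) * A7 * t ^ 7 + (-(31/725760)) * A9 * t ^ 9
      + (691/159667200) * A11 * t ^ 11 + (-(5461/12454041600)) * A13 * t ^ 13|
      ≤ (2 * M + 1) * |t| ^ 14 := by
  have p0 : (0:ℝ) ≤ |t| := abs_nonneg t
  have pt : (0:ℝ) ≤ |t| ^ 14 := by positivity
  have pMt : (0:ℝ) ≤ M * |t| ^ 14 := by positivity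
  have step : ∀ (c A : ℝ) (k : ℕ), |A| * |t| ^ k ≤ M * |t| ^ 14 →
      |c * A * t ^ k| ≤ |c| * (M * |t| ^ 14) := by
    intro c A k hk
    rw [abs_mul, abs_mul, abs_pow, mul_assoc]
    exact mul_le_mul_of_nonneg_left hk (abs_nonneg c)
  have k1 : |A1| * |t| ^ 1 ≤ M * |t| ^ 14 := by
    calc |A1| * |t| ^ 1 ≤ (M * |t| ^ 13) * |t| ^ 1 := by
          exact mul_le_mul_of_nonneg_right h1 (by positivity)
      _ = M * |t| ^ 14 := by ring
  have k3 : |A3| * |t| ^ 3 ≤ M * |t| ^ 14 := by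
    calc |A3| * |t| ^ 3 ≤ (M * |t| ^ 11) * |t| ^ 3 := by
          exact mul_le_mul_of_nonneg_right h3 (by positivity)
      _ = M * |t| ^ 14 := by ring
  have k5 : |A5| * |t| ^ 5 ≤ M * |t| ^ 14 := by
    calc |A5| * |t| ^ 5 ≤ (M * |t| ^ 9) * |t| ^ 5 := by
          exact mul_le_mul_of_nonneg_right h5 (by positivity)
      _ = M * |t| ^ 14 := by ring
  have k7 : |A7| * |t| ^ 7 ≤ M * |t| ^ 14 := by
    calc |A7| * |t| ^ 7 ≤ (M * |t| ^ 7) * |t| ^ 7 := by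
          exact mul_le_mul_of_nonneg_right h7 (by positivity)
      _ = M * |t| ^ 14 := by ring
  have k9 : |A9| * |t| ^ 9 ≤ M * |t| ^ 14 := by
    calc |A9| * |t| ^ 9 ≤ (M * |t| ^ 5) * |t| ^ 9 := by
          exact mul_le_mul_of_nonneg_right h9 (by positivity)
      _ = M * |t| ^ 14 := by ring
  have k11 : |A11| * |t| ^ 11 ≤ M * |t| ^ 14 := by
    calc |A11| * |t| ^ 11 ≤ (M * |t| ^ 3) * |t| ^ 11 := by
          exact mul_le_mul_of_nonneg_right h11 (by positivity)
      _ = M * |t| ^ 14 := by ring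
  have k13 : |A13| * |t| ^ 13 ≤ M * |t| ^ 14 := by
    calc |A13| * |t| ^ 13 ≤ (M * |t| ^ 1) * |t| ^ 13 := by
          exact mul_le_mul_of_nonneg_right h13 (by positivity)
      _ = M * |t| ^ 14 := by ring
  have b1 := step (-(1/2)) A1 1 k1
  have b3 := step (1/24) A3 3 k3
  have b5 := step (-(1/240)) A5 5 k5
  have b7 := step (17/40320) A7 7 k7
  have b9 := step (-(31/725760)) A9 9 k9
  have b11 := step (691/159667200) A11 11 k11
  have b13 := step (-(5461/12454041600)) A13 13 k13
  rw [show |(-(1/2) : ℝ)| = 1/2 by norm_num] at b1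
  rw [show |((1/24) : ℝ)| = 1/24 by norm_num] at b3
  rw [show |(-(1/240) : ℝ)| = 1/240 by norm_num] at b5
  rw [show |((17/40320) : ℝ)| = 17/40320 by norm_num] at b7
  rw [show |(-(31/725760) : ℝ)| = 31/725760 by norm_num] at b9
  rw [show |((691/159667200) : ℝ)| = 691/159667200 by norm_num] at b11
  rw [show |(-(5461/12454041600) : ℝ)| = 5461/12454041600 by norm_num] at b13
  set y1 := (-(1/2)) * A1 * t ^ 1
  set y2 := (1/24) * A3 * t ^ 3
  set y3 := (-(1/240)) * A5 * t ^ 5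
  set y4 := (17/40320) * A7 * t ^ 7
  set y5 := (-(31/725760)) * A9 * t ^ 9
  set y6 := (691/159667200) * A11 * t ^ 11
  set y7 := (-(5461/12454041600)) * A13 * t ^ 13
  have t7 := abs_add_le (A0 + y1 + y2 + y3 + y4 + y5 + y6) y7
  have t6 := abs_add_le (A0 + y1 + y2 + y3 + y4 + y5) y6
  have t5 := abs_add_le (A0 + y1 + y2 + y3 + y4) y5
  have t4 := abs_add_le (A0 + y1 + y2 + y3) y4
  have t3 := abs_add_le (A0 + y1 + y2) y3
  have t2 := abs_add_le (A0 + y1) y2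
  have t1 := abs_add_le A0 y1
  linarith


/-- symmetric Taylor-type formula. There are universal constants
`c_3,…,c_7` such that for every `f` of class `C^{14}` with bounded derivatives up to
order `14`, there is `C_f > 0` with
`f(b) - f(a) = (f'(a)+f'(b))/2 (b-a) - (f'''(a)+f'''(b))/24 (b-a)³
 + Σ_{r=3}^7 c_r (f^{(2r-1)}(a)+f^{(2r-1)}(b))(b-a)^{2r-1} + R(a,b)`,
`|R(a,b)| ≤ C_f |b-a|^{14}`. -/
theorem symmetric_taylor_formula :
    ∃ c : ℕ → ℝ, ∀ f : ℝ → ℝ, ContDiff ℝ 14 f →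
      (∀ k ≤ 14, ∃ M : ℝ, ∀ x : ℝ, |iteratedDeriv k f x| ≤ M) →
      ∃ C > (0 : ℝ), ∀ a b : ℝ,
        |f b - f a -
          ((deriv f a + deriv f b) / 2 * (b - a)
            - (iteratedDeriv 3 f a + iteratedDeriv 3 f b) / 24 * (b - a) ^ 3
            + ∑ r ∈ Finset.Icc 3 7,
                c r * (iteratedDeriv (2 * r - 1) f a + iteratedDeriv (2 * r - 1) f b) *
                  (b - a) ^ (2 * r - 1))|
          ≤ C * |b - a| ^ 14 := by
  refine ⟨fun r => if r = 3 then 1/240 else if r = 4 then -(17/40320)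
    else if r = 5 then 31/725760 else if r = 6 then -(691/159667200)
    else if r = 7 then 5461/12454041600 else 0, ?_⟩
  intro f hf hb
  obtain ⟨M, hM⟩ := hb 14 le_rfl
  have hM0 : (0:ℝ) ≤ M := (abs_nonneg _).trans (hM 0)
  have hf14 : ContDiff ℝ (14 : ℕ) f := by exact_mod_cast hf
  have cd : ∀ j k : ℕ, k + j = 14 → ContDiff ℝ (k : ℕ) (iteratedDeriv j f) := by
    intro j k hjk
    rw [iteratedDeriv_eq_iterate]
    apply ContDiff.iterate_deriv' k j
    rw [hjk]
    exact hf14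
  have bd : ∀ j k : ℕ, k + j = 14 → ∀ z, |iteratedDeriv k (iteratedDeriv j f) z| ≤ M := by
    intro j k hjk z
    rw [iter_iter, hjk]
    exact hM z
  refine ⟨2 * M + 1, by linarith, ?_⟩
  intro a b
  have h0 := taylor_bound (N := 13) hf14 hM a b
  have h1 := taylor_bound (N := 12) (cd 1 13 (by norm_num)) (bd 1 13 (by norm_num)) a b
  have h3 := taylor_bound (N := 10) (cd 3 11 (by norm_num)) (bd 3 11 (by norm_num)) a b
  have h5 := taylor_bound (N := 8) (cd 5 9 (by norm_num)) (bd 5 9 (by norm_num)) a b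
  have h7 := taylor_bound (N := 6) (cd 7 7 (by norm_num)) (bd 7 7 (by norm_num)) a b
  have h9 := taylor_bound (N := 4) (cd 9 5 (by norm_num)) (bd 9 5 (by norm_num)) a b
  have h11 := taylor_bound (N := 2) (cd 11 3 (by norm_num)) (bd 11 3 (by norm_num)) a b
  have h13 := taylor_bound (N := 0) (cd 13 1 (by norm_num)) (bd 13 1 (by norm_num)) a b
  have bound := combo_bound hM0 h0 h1 h3 h5 h7 h9 h11 h13
  refine le_trans (le_of_eq (congrArg (fun z => |z|) ?_)) bound
  have hIcc : (Finset.Icc 3 7 : Finset ℕ) = {3, 4, 5, 6, 7} := rfl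
  simp only [hIcc, Finset.sum_insert, Finset.mem_insert, Finset.mem_singleton,
    Finset.sum_singleton, Finset.sum_range_succ, Finset.sum_range_zero, iter_iter,
    iteratedDeriv_zero, ← iteratedDeriv_one]
  norm_num [Nat.factorial]
  ring
end
end

section
/- Let H ∈ (0, 1/2], let n ≥ 1 and let 0 ≤ s < t. Set a = ⌊2^{n/2} s⌋ and b = ⌊2^{n/2} t⌋. Then Σ_{j=a}^{b−1} Σ_{j'=a}^{b−1} |(j+1)^{2H} − j^{2H} + |j'−j+1|^{2H} − |j'−j|^{2H}| ≤ 3 (b − a) b^{2H}; consequently 2^{−nH−1} times this double sum is at most (3 t^{2H}/2)(1 + 2^{n/2}(t−s)). -/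
open MeasureTheory ProbabilityTheory Filter Finset Real

noncomputable section

variable {Ω : Type*}

private lemma tele_aux (H : ℝ) (hH : 0 < 2 * H) (m : ℕ) :
    ∑ k ∈ Finset.range m, (((k : ℝ) + 1) ^ (2 * H) - (k : ℝ) ^ (2 * H))
      = (m : ℝ) ^ (2 * H) := by
  have h := Finset.sum_range_sub (fun k : ℕ => ((k : ℝ)) ^ (2 * H)) m
  push_cast at h
  rw [h, Real.zero_rpow hH.ne']
  ring

private lemma teleRev_aux (H : ℝ) (hH : 0 < 2 * H) (m : ℕ) :
    ∑ i ∈ Finset.range m, (((m : ℝ) - (i : ℝ)) ^ (2 * H) - ((m : ℝ) - (i : ℝ) - 1) ^ (2 * H))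
      = (m : ℝ) ^ (2 * H) := by
  rw [← tele_aux H hH m, ← Finset.sum_range_reflect
    (fun k : ℕ => (((k : ℝ) + 1) ^ (2 * H) - (k : ℝ) ^ (2 * H))) m]
  refine Finset.sum_congr rfl fun i hi => ?_
  simp only [Finset.mem_range] at hi
  have h1 : ((m - 1 - i : ℕ) : ℝ) = (m : ℝ) - 1 - i := by
    have : 1 + i ≤ m := by omega
    rw [Nat.sub_sub, Nat.cast_sub this]
    push_cast; ring
  rw [h1]; ring_nf

private lemma sumB_aux (H : ℝ) (hH : 0 < 2 * H) (a b j : ℕ) (ha : a ≤ j) (hb : j ≤ b) :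
    ∑ j' ∈ Finset.Ico a b,
        |(|(j' : ℝ) - (j : ℝ) + 1| ^ (2 * H) - |(j' : ℝ) - (j : ℝ)| ^ (2 * H))|
      ≤ 2 * (b : ℝ) ^ (2 * H) := by
  rw [← Finset.sum_Ico_consecutive _ ha hb]
  have hbpow : ∀ c : ℕ, c ≤ b → ((c : ℕ) : ℝ) ^ (2 * H) ≤ (b : ℝ) ^ (2 * H) := by
    intro c hc
    exact Real.rpow_le_rpow (by positivity) (by exact_mod_cast hc) (le_of_lt hH)
  have hleft : ∑ j' ∈ Finset.Ico a j,
      |(|(j' : ℝ) - (j : ℝ) + 1| ^ (2 * H) - |(j' : ℝ) - (j : ℝ)| ^ (2 * H))|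
      = ((j - a : ℕ) : ℝ) ^ (2 * H) := by
    rw [Finset.sum_Ico_eq_sum_range, ← teleRev_aux H hH (j - a)]
    refine Finset.sum_congr rfl fun i hi => ?_
    simp only [Finset.mem_range] at hi
    set m : ℕ := j - a with hm
    have hjm : (j : ℝ) = (a : ℝ) + (m : ℝ) := by
      have : a + m = j := by omega
      exact_mod_cast (by exact_mod_cast this.symm : (j:ℝ) = ((a + m : ℕ) : ℝ))
    have hmi : (1 : ℝ) ≤ (m : ℝ) - (i : ℝ) := by
      have : i + 1 ≤ m := hi
      have := (Nat.cast_le (α := ℝ)).2 this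
      push_cast at this; linarith
    have e1 : |((a + i : ℕ) : ℝ) - (j : ℝ) + 1| = (m : ℝ) - (i : ℝ) - 1 := by
      push_cast [hjm]
      rw [abs_of_nonpos (by linarith)]; ring
    have e2 : |((a + i : ℕ) : ℝ) - (j : ℝ)| = (m : ℝ) - (i : ℝ) := by
      push_cast [hjm]
      rw [abs_of_nonpos (by linarith)]; ring
    rw [e1, e2, abs_sub_comm, abs_of_nonneg]
    exact sub_nonneg.2 (Real.rpow_le_rpow (by linarith) (by linarith) (le_of_lt hH))
  have hright : ∑ j' ∈ Finset.Ico j b,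
      |(|(j' : ℝ) - (j : ℝ) + 1| ^ (2 * H) - |(j' : ℝ) - (j : ℝ)| ^ (2 * H))|
      = ((b - j : ℕ) : ℝ) ^ (2 * H) := by
    rw [Finset.sum_Ico_eq_sum_range, ← tele_aux H hH (b - j)]
    refine Finset.sum_congr rfl fun i hi => ?_
    have e1 : |((j + i : ℕ) : ℝ) - (j : ℝ) + 1| = (i : ℝ) + 1 := by
      push_cast
      rw [show (j : ℝ) + i - j + 1 = (i : ℝ) + 1 from by ring, abs_of_nonneg (by positivity)]
    have e2 : |((j + i : ℕ) : ℝ) - (j : ℝ)| = (i : ℝ) := by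
      push_cast
      rw [show (j : ℝ) + i - j = (i : ℝ) from by ring, abs_of_nonneg (by positivity)]
    rw [e1, e2, abs_of_nonneg]
    exact sub_nonneg.2 (Real.rpow_le_rpow (by positivity) (by linarith) (le_of_lt hH))
  rw [hleft, hright]
  have h1 := hbpow (j - a) (by omega)
  have h2 := hbpow (b - j) (by omega)
  linarith

/-- real-analytic double-sum bound from Step 4, case `l = 0`. With
`a = ⌊2^{n/2} s⌋` and `b = ⌊2^{n/2} t⌋`,
`Σ_{j,j'=a}^{b-1} |(j+1)^{2H} - j^{2H} + |j'-j+1|^{2H} - |j'-j|^{2H}| ≤ 3 (b-a) b^{2H}`,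
and `2^{-nH-1}` times this double sum is at most `(3 t^{2H}/2)(1 + 2^{n/2}(t-s))`. -/
theorem double_sum_covariance_bound
    (H : ℝ) (hH0 : 0 < H) (hH2 : H ≤ 1 / 2) (n : ℕ) (hn : 1 ≤ n)
    (s t : ℝ) (hs : 0 ≤ s) (hst : s < t) :
    (∑ j ∈ Finset.Ico ⌊(2 : ℝ) ^ ((n : ℝ) / 2) * s⌋₊ ⌊(2 : ℝ) ^ ((n : ℝ) / 2) * t⌋₊,
        ∑ j' ∈ Finset.Ico ⌊(2 : ℝ) ^ ((n : ℝ) / 2) * s⌋₊ ⌊(2 : ℝ) ^ ((n : ℝ) / 2) * t⌋₊,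
          |((j : ℝ) + 1) ^ (2 * H) - (j : ℝ) ^ (2 * H)
            + |(j' : ℝ) - (j : ℝ) + 1| ^ (2 * H) - |(j' : ℝ) - (j : ℝ)| ^ (2 * H)|)
      ≤ 3 * ((⌊(2 : ℝ) ^ ((n : ℝ) / 2) * t⌋₊ : ℝ) - (⌊(2 : ℝ) ^ ((n : ℝ) / 2) * s⌋₊ : ℝ)) *
          (⌊(2 : ℝ) ^ ((n : ℝ) / 2) * t⌋₊ : ℝ) ^ (2 * H) ∧
    (2 : ℝ) ^ (-(n : ℝ) * H - 1) *
        (∑ j ∈ Finset.Ico ⌊(2 : ℝ) ^ ((n : ℝ) / 2) * s⌋₊ ⌊(2 : ℝ) ^ ((n : ℝ) / 2) * t⌋₊,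
          ∑ j' ∈ Finset.Ico ⌊(2 : ℝ) ^ ((n : ℝ) / 2) * s⌋₊ ⌊(2 : ℝ) ^ ((n : ℝ) / 2) * t⌋₊,
            |((j : ℝ) + 1) ^ (2 * H) - (j : ℝ) ^ (2 * H)
              + |(j' : ℝ) - (j : ℝ) + 1| ^ (2 * H) - |(j' : ℝ) - (j : ℝ)| ^ (2 * H)|)
      ≤ 3 * t ^ (2 * H) / 2 * (1 + (2 : ℝ) ^ ((n : ℝ) / 2) * (t - s)) := by
  have hH : (0 : ℝ) < 2 * H := by linarith
  set a : ℕ := ⌊(2 : ℝ) ^ ((n : ℝ) / 2) * s⌋₊ with ha_def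
  set b : ℕ := ⌊(2 : ℝ) ^ ((n : ℝ) / 2) * t⌋₊ with hb_def
  have h2pos : (0 : ℝ) < (2 : ℝ) ^ ((n : ℝ) / 2) := Real.rpow_pos_of_pos two_pos _
  have hab : a ≤ b := Nat.floor_le_floor (by nlinarith)
  have hbpow_nonneg : (0 : ℝ) ≤ (b : ℝ) ^ (2 * H) := Real.rpow_nonneg (by positivity) _
  -- first part
  have key : (∑ j ∈ Finset.Ico a b, ∑ j' ∈ Finset.Ico a b,
        |((j : ℝ) + 1) ^ (2 * H) - (j : ℝ) ^ (2 * H)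
          + |(j' : ℝ) - (j : ℝ) + 1| ^ (2 * H) - |(j' : ℝ) - (j : ℝ)| ^ (2 * H)|)
      ≤ 3 * ((b : ℝ) - (a : ℝ)) * (b : ℝ) ^ (2 * H) := by
    have hA : ∀ j : ℕ, (0:ℝ) ≤ ((j : ℝ) + 1) ^ (2 * H) - (j : ℝ) ^ (2 * H) := fun j =>
      sub_nonneg.2 (Real.rpow_le_rpow (by positivity) (by linarith) (le_of_lt hH))
    have step1 : ∀ j ∈ Finset.Ico a b,
        (∑ j' ∈ Finset.Ico a b,
          |((j : ℝ) + 1) ^ (2 * H) - (j : ℝ) ^ (2 * H)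
            + |(j' : ℝ) - (j : ℝ) + 1| ^ (2 * H) - |(j' : ℝ) - (j : ℝ)| ^ (2 * H)|)
        ≤ ((b : ℝ) - (a : ℝ)) * (((j : ℝ) + 1) ^ (2 * H) - (j : ℝ) ^ (2 * H))
            + 2 * (b : ℝ) ^ (2 * H) := by
      intro j hj
      simp only [Finset.mem_Ico] at hj
      calc (∑ j' ∈ Finset.Ico a b,
          |((j : ℝ) + 1) ^ (2 * H) - (j : ℝ) ^ (2 * H)
            + |(j' : ℝ) - (j : ℝ) + 1| ^ (2 * H) - |(j' : ℝ) - (j : ℝ)| ^ (2 * H)|)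
          ≤ ∑ j' ∈ Finset.Ico a b,
            ((((j : ℝ) + 1) ^ (2 * H) - (j : ℝ) ^ (2 * H))
              + |(|(j' : ℝ) - (j : ℝ) + 1| ^ (2 * H) - |(j' : ℝ) - (j : ℝ)| ^ (2 * H))|) := by
            refine Finset.sum_le_sum fun j' _ => ?_
            calc |((j : ℝ) + 1) ^ (2 * H) - (j : ℝ) ^ (2 * H)
                + |(j' : ℝ) - (j : ℝ) + 1| ^ (2 * H) - |(j' : ℝ) - (j : ℝ)| ^ (2 * H)|
                = |(((j : ℝ) + 1) ^ (2 * H) - (j : ℝ) ^ (2 * H))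
                  + (|(j' : ℝ) - (j : ℝ) + 1| ^ (2 * H) - |(j' : ℝ) - (j : ℝ)| ^ (2 * H))| := by
                  ring_nf
              _ ≤ |(((j : ℝ) + 1) ^ (2 * H) - (j : ℝ) ^ (2 * H))|
                  + |(|(j' : ℝ) - (j : ℝ) + 1| ^ (2 * H) - |(j' : ℝ) - (j : ℝ)| ^ (2 * H))| :=
                  abs_add_le _ _
              _ = (((j : ℝ) + 1) ^ (2 * H) - (j : ℝ) ^ (2 * H))
                  + |(|(j' : ℝ) - (j : ℝ) + 1| ^ (2 * H) - |(j' : ℝ) - (j : ℝ)| ^ (2 * H))| := by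
                  rw [abs_of_nonneg (hA j)]
        _ = (Finset.Ico a b).card * (((j : ℝ) + 1) ^ (2 * H) - (j : ℝ) ^ (2 * H))
              + ∑ j' ∈ Finset.Ico a b,
                |(|(j' : ℝ) - (j : ℝ) + 1| ^ (2 * H) - |(j' : ℝ) - (j : ℝ)| ^ (2 * H))| := by
            rw [Finset.sum_add_distrib, Finset.sum_const, nsmul_eq_mul]
        _ ≤ ((b : ℝ) - (a : ℝ)) * (((j : ℝ) + 1) ^ (2 * H) - (j : ℝ) ^ (2 * H))
              + 2 * (b : ℝ) ^ (2 * H) := by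
            have hcard : ((Finset.Ico a b).card : ℝ) = (b : ℝ) - (a : ℝ) := by
              rw [Nat.card_Ico, Nat.cast_sub hab]
            rw [hcard]
            exact add_le_add le_rfl (sumB_aux H hH a b j hj.1 (le_of_lt hj.2))
    calc (∑ j ∈ Finset.Ico a b, ∑ j' ∈ Finset.Ico a b,
        |((j : ℝ) + 1) ^ (2 * H) - (j : ℝ) ^ (2 * H)
          + |(j' : ℝ) - (j : ℝ) + 1| ^ (2 * H) - |(j' : ℝ) - (j : ℝ)| ^ (2 * H)|)
        ≤ ∑ j ∈ Finset.Ico a b,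
            (((b : ℝ) - (a : ℝ)) * (((j : ℝ) + 1) ^ (2 * H) - (j : ℝ) ^ (2 * H))
              + 2 * (b : ℝ) ^ (2 * H)) := Finset.sum_le_sum step1
      _ = ((b : ℝ) - (a : ℝ)) *
            (∑ j ∈ Finset.Ico a b, (((j : ℝ) + 1) ^ (2 * H) - (j : ℝ) ^ (2 * H)))
            + (Finset.Ico a b).card * (2 * (b : ℝ) ^ (2 * H)) := by
          rw [Finset.sum_add_distrib, Finset.mul_sum, Finset.sum_const, nsmul_eq_mul]
      _ ≤ 3 * ((b : ℝ) - (a : ℝ)) * (b : ℝ) ^ (2 * H) := by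
          have hcard : ((Finset.Ico a b).card : ℝ) = (b : ℝ) - (a : ℝ) := by
            rw [Nat.card_Ico, Nat.cast_sub hab]
          have htel : ∑ j ∈ Finset.Ico a b, (((j : ℝ) + 1) ^ (2 * H) - (j : ℝ) ^ (2 * H))
              = (b : ℝ) ^ (2 * H) - (a : ℝ) ^ (2 * H) := by
            rw [Finset.sum_Ico_eq_sum_range]
            have h := Finset.sum_range_sub (fun k : ℕ => ((a + k : ℕ) : ℝ) ^ (2 * H)) (b - a)
            rw [show a + (b - a) = b from by omega, show a + 0 = a from by omega] at h
            rw [← h]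
            refine Finset.sum_congr rfl fun i _ => ?_
            have hc : ((a + (i + 1) : ℕ) : ℝ) = ((a + i : ℕ) : ℝ) + 1 := by push_cast; ring
            rw [hc]
          rw [hcard, htel]
          have hba : (0:ℝ) ≤ (b : ℝ) - (a : ℝ) := by
            have := (Nat.cast_le (α := ℝ)).2 hab; linarith
          have hapow : (0:ℝ) ≤ (a : ℝ) ^ (2 * H) := Real.rpow_nonneg (by positivity) _
          nlinarith
  refine ⟨key, ?_⟩
  -- second part
  have hb_le : (b : ℝ) ≤ (2 : ℝ) ^ ((n : ℝ) / 2) * t :=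
    Nat.floor_le (by nlinarith)
  have ha_ge : (2 : ℝ) ^ ((n : ℝ) / 2) * s - 1 ≤ (a : ℝ) := by
    have := Nat.lt_floor_add_one ((2 : ℝ) ^ ((n : ℝ) / 2) * s)
    linarith
  have hba_bound : (b : ℝ) - (a : ℝ) ≤ 1 + (2 : ℝ) ^ ((n : ℝ) / 2) * (t - s) := by
    nlinarith
  have hbpow_bound : (b : ℝ) ^ (2 * H) ≤ (2 : ℝ) ^ ((n : ℝ) * H) * t ^ (2 * H) := by
    calc (b : ℝ) ^ (2 * H) ≤ ((2 : ℝ) ^ ((n : ℝ) / 2) * t) ^ (2 * H) :=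
          Real.rpow_le_rpow (by positivity) hb_le (le_of_lt hH)
      _ = (2 : ℝ) ^ ((n : ℝ) * H) * t ^ (2 * H) := by
          rw [Real.mul_rpow (le_of_lt h2pos) (by nlinarith : (0:ℝ) ≤ t),
            ← Real.rpow_mul (by norm_num : (0:ℝ) ≤ 2),
            show ((n : ℝ) / 2) * (2 * H) = (n : ℝ) * H from by ring]
  have hpow_pos : (0 : ℝ) < (2 : ℝ) ^ (-(n : ℝ) * H - 1) := Real.rpow_pos_of_pos two_pos _
  have hpow_id : (2 : ℝ) ^ (-(n : ℝ) * H - 1) * (2 : ℝ) ^ ((n : ℝ) * H) = 1 / 2 := by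
    rw [← Real.rpow_add two_pos, show -(n : ℝ) * H - 1 + (n : ℝ) * H = -1 from by ring,
      Real.rpow_neg (by norm_num : (0:ℝ) ≤ 2), Real.rpow_one]
    norm_num
  have hba : (0:ℝ) ≤ (b : ℝ) - (a : ℝ) := by
    have := (Nat.cast_le (α := ℝ)).2 hab; linarith
  have htpow : (0:ℝ) ≤ t ^ (2 * H) := Real.rpow_nonneg (by nlinarith) _
  have hD : (0:ℝ) ≤ (2 : ℝ) ^ ((n : ℝ) / 2) * (t - s) := by nlinarith
  calc (2 : ℝ) ^ (-(n : ℝ) * H - 1) *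
        (∑ j ∈ Finset.Ico a b, ∑ j' ∈ Finset.Ico a b,
          |((j : ℝ) + 1) ^ (2 * H) - (j : ℝ) ^ (2 * H)
            + |(j' : ℝ) - (j : ℝ) + 1| ^ (2 * H) - |(j' : ℝ) - (j : ℝ)| ^ (2 * H)|)
      ≤ (2 : ℝ) ^ (-(n : ℝ) * H - 1) * (3 * ((b : ℝ) - (a : ℝ)) * (b : ℝ) ^ (2 * H)) :=
        mul_le_mul_of_nonneg_left key (le_of_lt hpow_pos)
    _ ≤ (2 : ℝ) ^ (-(n : ℝ) * H - 1) *
        (3 * (1 + (2 : ℝ) ^ ((n : ℝ) / 2) * (t - s)) * ((2 : ℝ) ^ ((n : ℝ) * H) * t ^ (2 * H))) := by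
        refine mul_le_mul_of_nonneg_left ?_ (le_of_lt hpow_pos)
        have h1 : (0:ℝ) ≤ 1 + (2 : ℝ) ^ ((n : ℝ) / 2) * (t - s) := by linarith
        have := mul_le_mul (by linarith : 3 * ((b : ℝ) - (a : ℝ)) ≤
            3 * (1 + (2 : ℝ) ^ ((n : ℝ) / 2) * (t - s))) hbpow_bound hbpow_nonneg
            (by linarith)
        exact this
    _ = 3 * t ^ (2 * H) / 2 * (1 + (2 : ℝ) ^ ((n : ℝ) / 2) * (t - s)) := by
        have : (2 : ℝ) ^ (-(n : ℝ) * H - 1) *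
            (3 * (1 + (2 : ℝ) ^ ((n : ℝ) / 2) * (t - s)) * ((2 : ℝ) ^ ((n : ℝ) * H) * t ^ (2 * H)))
            = ((2 : ℝ) ^ (-(n : ℝ) * H - 1) * (2 : ℝ) ^ ((n : ℝ) * H)) *
              (3 * (1 + (2 : ℝ) ^ ((n : ℝ) / 2) * (t - s)) * t ^ (2 * H)) := by ring
        rw [this, hpow_id]; ring
end
end
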